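/- arXiv:2509.03125 — 8 statements merged into one kernel-verified Lean document; each statement's English description precedes it below -/
import Mathlib

section
/- Let μ : [0,∞) → [0,∞) be Lebesgue integrable, let g₀ ≥ 0 be a real number, let (aₙ)_{n≥0} be nonnegative real numbers, and let (gₙ)_{n≥1} be a sequence of nonnegative continuous functions on [0,∞) such that g₁(t) ≤ a₀ + g₀·∫₀ᵗ μ(t') dt' for all t ≥ 0, and g_{n+1}(t) ≤ aₙ + ∫₀ᵗ μ(t')·gₙ(t') dt' for all t ≥ 0 and all n ≥ 1. Then for every n ≥ 0, sup_{t ∈ [0,∞)} g_{n+1}(t) ≤ Σ_{k=0}^{n} aₙ₋ₖ·‖μ‖₁ᵏ / k! + g₀·‖μ‖₁^{n+1} / (n+1)!. -/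
/-!
Put `F t = ∫₀ᵗ μ`. Since `F` is absolutely continuous with `F' = μ` almost everywhere, the
fundamental theorem of calculus gives `∫₀ᵗ μ F^k = F(t)^{k+1} / (k+1)`. Hence the polynomials
`Pₙ(x) = ∑_{k ≤ n} a_{n-k} x^k / k! + g₀ x^{n+1} / (n+1)!` satisfy
`a_{n+1} + ∫₀ᵗ μ Pₙ(F) = P_{n+1}(F(t))`, and induction on `n` gives `g_{n+1}(t) ≤ Pₙ(F(t))`.
Finally `Pₙ` is increasing on `[0, ∞)` and `0 ≤ F(t) ≤ ‖μ‖₁`.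
-/

open MeasureTheory Set Interval

theorem AbsolutelyContinuousOnInterval.fun_pow {f : ℝ → ℝ} {a b : ℝ}
    (hf : AbsolutelyContinuousOnInterval f a b) (n : ℕ) :
    AbsolutelyContinuousOnInterval (fun x ↦ f x ^ n) a b := by
  induction n with
  | zero => simpa using (contDiffOn_const (c := (1 : ℝ))).absolutelyContinuousOnInterval
  | succ n ih => simpa only [pow_succ] using ih.fun_mul hf

theorem integral_mul_integral_pow {μ : ℝ → ℝ} {a b : ℝ}
    (hμ : IntervalIntegrable μ volume a b) (k : ℕ) :
    ∫ x in a..b, μ x * (∫ s in a..x, μ s) ^ k = (∫ s in a..b, μ s) ^ (k + 1) / (k + 1) := by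
  set F : ℝ → ℝ := fun x ↦ ∫ s in a..x, μ s
  have hderiv : ∀ᵐ x, x ∈ Ι a b →
      deriv (fun x ↦ F x ^ (k + 1)) x = (k + 1) * (μ x * F x ^ k) := by
    filter_upwards [hμ.ae_hasDerivAt_integral] with x hx hxab
    rw [((hx (uIoc_subset_uIcc hxab) a left_mem_uIcc).fun_pow (k + 1)).deriv]
    push_cast
    ring
  have hFTC := ((hμ.absolutelyContinuousOnInterval_intervalIntegral left_mem_uIcc).fun_pow
    (k + 1)).integral_deriv_eq_sub
  rw [intervalIntegral.integral_congr_ae hderiv, intervalIntegral.integral_const_mul] at hFTC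
  simp only [F, intervalIntegral.integral_same, zero_pow k.succ_ne_zero, sub_zero] at hFTC
  rw [← hFTC]
  field_simp

theorem integral_mul_integral_pow_div_factorial {μ : ℝ → ℝ} {a b : ℝ}
    (hμ : IntervalIntegrable μ volume a b) (k : ℕ) :
    ∫ x in a..b, μ x * ((∫ s in a..x, μ s) ^ k / k.factorial) =
      (∫ s in a..b, μ s) ^ (k + 1) / (k + 1).factorial := by
  simp_rw [← mul_div_assoc, intervalIntegral.integral_div, integral_mul_integral_pow hμ,
    Nat.factorial_succ, Nat.cast_mul, div_div]
  push_cast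
  ring

/-- `Pₙ(x)`: the bound on `g (n + 1) t` is `Pₙ(∫₀ᵗ μ)`, and that of the theorem is `Pₙ(‖μ‖₁)`. -/
noncomputable def iterBound (a : ℕ → ℝ) (g₀ : ℝ) (n : ℕ) (x : ℝ) : ℝ :=
  ∑ k ∈ Finset.range (n + 1), a (n - k) * x ^ k / k.factorial +
    g₀ * x ^ (n + 1) / (n + 1).factorial

theorem iterBound_zero (a : ℕ → ℝ) (g₀ x : ℝ) : iterBound a g₀ 0 x = a 0 + g₀ * x := by
  simp [iterBound]

theorem iterBound_mono {a : ℕ → ℝ} {g₀ : ℝ} (ha : ∀ n, 0 ≤ a n) (hg₀ : 0 ≤ g₀) (n : ℕ)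
    {x y : ℝ} (hx : 0 ≤ x) (hxy : x ≤ y) : iterBound a g₀ n x ≤ iterBound a g₀ n y := by
  unfold iterBound
  gcongr with k
  exact ha _

theorem integral_mul_iterBound {μ : ℝ → ℝ} {t₀ t : ℝ} (hμ : IntervalIntegrable μ volume t₀ t)
    (a : ℕ → ℝ) (g₀ : ℝ) (n : ℕ) :
    ∫ x in t₀..t, μ x * iterBound a g₀ n (∫ s in t₀..x, μ s) =
      iterBound a g₀ (n + 1) (∫ s in t₀..t, μ s) - a (n + 1) := by
  set F : ℝ → ℝ := fun x ↦ ∫ s in t₀..x, μ s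
  have hF : ContinuousOn F [[t₀, t]] :=
    (hμ.absolutelyContinuousOnInterval_intervalIntegral left_mem_uIcc).continuousOn
  have hint (k : ℕ) : IntervalIntegrable (fun x ↦ μ x * (F x ^ k / k.factorial)) volume t₀ t :=
    hμ.mul_continuousOn ((hF.pow k).div_const _)
  have hsplit (x : ℝ) : μ x * iterBound a g₀ n (F x) =
      ∑ k ∈ Finset.range (n + 1), a (n - k) * (μ x * (F x ^ k / k.factorial)) +
        g₀ * (μ x * (F x ^ (n + 1) / (n + 1).factorial)) := by
    simp only [iterBound, mul_add, Finset.mul_sum]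
    congr 1
    · exact Finset.sum_congr rfl fun k _ ↦ by ring
    · ring
  rw [intervalIntegral.integral_congr fun x _ ↦ hsplit x, intervalIntegral.integral_add,
    intervalIntegral.integral_finsetSum]
  · simp only [intervalIntegral.integral_const_mul, F, integral_mul_integral_pow_div_factorial hμ]
    rw [iterBound, Finset.sum_range_succ' _ (n + 1)]
    simp only [Nat.add_sub_add_right, Nat.sub_zero, pow_zero, Nat.factorial_zero, Nat.cast_one,
      mul_one, div_one, mul_div_assoc]
    ring
  · exact fun k _ ↦ (hint k).const_mul _
  · simpa only [Finset.sum_fn] using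
      IntervalIntegrable.sum _ fun k _ ↦ (hint k).const_mul (a (n - k))
  · exact (hint _).const_mul _

theorem continuous_iterBound (a : ℕ → ℝ) (g₀ : ℝ) (n : ℕ) : Continuous (iterBound a g₀ n) := by
  unfold iterBound
  fun_prop

theorem le_iterBound_integral {μ : ℝ → ℝ} (hμ : ∀ t, 0 ≤ t → IntervalIntegrable μ volume 0 t)
    (hμ_nonneg : ∀ t, 0 ≤ t → 0 ≤ μ t) {g₀ : ℝ} {a : ℕ → ℝ} {g : ℕ → ℝ → ℝ}
    (hg_nonneg : ∀ n, 1 ≤ n → ∀ t, 0 ≤ t → 0 ≤ g n t)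
    (h1 : ∀ t, 0 ≤ t → g 1 t ≤ a 0 + g₀ * ∫ s in 0..t, μ s)
    (hrec : ∀ n, 1 ≤ n → ∀ t, 0 ≤ t → g (n + 1) t ≤ a n + ∫ s in 0..t, μ s * g n s)
    (n : ℕ) {t : ℝ} (ht : 0 ≤ t) : g (n + 1) t ≤ iterBound a g₀ n (∫ s in 0..t, μ s) := by
  induction n generalizing t with
  | zero => simpa only [iterBound_zero] using h1 t ht
  | succ n ih =>
    have hF : ContinuousOn (fun x ↦ ∫ s in 0..x, μ s) [[0, t]] :=
      ((hμ t ht).absolutelyContinuousOnInterval_intervalIntegral left_mem_uIcc).continuousOn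
    have hint : IntervalIntegrable (fun x ↦ μ x * iterBound a g₀ n (∫ s in 0..x, μ s))
        volume 0 t :=
      (hμ t ht).mul_continuousOn ((continuous_iterBound a g₀ n).comp_continuousOn hF)
    have hmono : ∫ s in 0..t, μ s * g (n + 1) s ≤
        ∫ s in 0..t, μ s * iterBound a g₀ n (∫ r in 0..s, μ r) := by
      rw [intervalIntegral.integral_of_le ht, intervalIntegral.integral_of_le ht]
      refine setIntegral_mono_of_nonneg (fun s hs ↦ ?_) (fun s hs ↦ ?_) hint.1
      · exact mul_nonneg (hμ_nonneg s hs.1.le) (hg_nonneg _ n.succ_pos s hs.1.le)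
      · exact mul_le_mul_of_nonneg_left (ih hs.1.le) (hμ_nonneg s hs.1.le)
    calc g (n + 1 + 1) t ≤ a (n + 1) + ∫ s in 0..t, μ s * g (n + 1) s := hrec _ n.succ_pos t ht
      _ ≤ a (n + 1) + ∫ s in 0..t, μ s * iterBound a g₀ n (∫ r in 0..s, μ r) := by gcongr
      _ = iterBound a g₀ (n + 1) (∫ s in 0..t, μ s) := by
        rw [integral_mul_iterBound (hμ t ht)]
        ring

theorem stmt_0_general (μ : ℝ → ℝ) (hμ_int : IntegrableOn μ (Set.Ici 0))
    (hμ_nonneg : ∀ t, 0 ≤ t → 0 ≤ μ t)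
    (g₀ : ℝ) (hg₀ : 0 ≤ g₀)
    (a : ℕ → ℝ) (ha : ∀ n, 0 ≤ a n)
    (g : ℕ → ℝ → ℝ)
    (hg_nonneg : ∀ n, 1 ≤ n → ∀ t, 0 ≤ t → 0 ≤ g n t)
    (h1 : ∀ t, 0 ≤ t → g 1 t ≤ a 0 + g₀ * ∫ t' in Set.Ioc 0 t, μ t')
    (hrec : ∀ n, 1 ≤ n → ∀ t, 0 ≤ t →
      g (n + 1) t ≤ a n + ∫ t' in Set.Ioc 0 t, μ t' * g n t') :
    ∀ n : ℕ, ∀ t, 0 ≤ t →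
      g (n + 1) t ≤
        (∑ k ∈ Finset.range (n + 1),
          a (n - k) * (∫ t' in Set.Ici (0:ℝ), μ t') ^ k / Nat.factorial k) +
        g₀ * (∫ t' in Set.Ici (0:ℝ), μ t') ^ (n + 1) / Nat.factorial (n + 1) := by
  intro n t ht
  have hμ (t : ℝ) (ht : 0 ≤ t) : IntervalIntegrable μ volume 0 t :=
    (intervalIntegrable_iff_integrableOn_Ioc_of_le ht).2
      (hμ_int.mono_set (Ioc_subset_Ioi_self.trans Ioi_subset_Ici_self))
  have hF_nonneg : 0 ≤ ∫ s in 0..t, μ s :=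
    intervalIntegral.integral_nonneg ht fun s hs ↦ hμ_nonneg s hs.1
  have hF_le : ∫ s in 0..t, μ s ≤ ∫ s in Ici 0, μ s := by
    rw [intervalIntegral.integral_of_le ht]
    exact setIntegral_mono_set hμ_int
      ((ae_restrict_iff' measurableSet_Ici).2 (.of_forall hμ_nonneg))
      (Ioc_subset_Ioi_self.trans Ioi_subset_Ici_self).eventuallyLE
  calc g (n + 1) t ≤ iterBound a g₀ n (∫ s in 0..t, μ s) :=
        le_iterBound_integral hμ hμ_nonneg hg_nonneg
          (fun t ht ↦ by simpa only [intervalIntegral.integral_of_le ht] using h1 t ht)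
          (fun n hn t ht ↦ by
            simpa only [intervalIntegral.integral_of_le ht] using hrec n hn t ht)
          n ht
    _ ≤ iterBound a g₀ n (∫ s in Ici 0, μ s) := iterBound_mono ha hg₀ n hF_nonneg hF_le

/-- Lemma 3.1 (iterative integral inequality). -/
theorem stmt_0 (μ : ℝ → ℝ) (hμ_int : IntegrableOn μ (Set.Ici 0))
    (hμ_nonneg : ∀ t, 0 ≤ t → 0 ≤ μ t)
    (g₀ : ℝ) (hg₀ : 0 ≤ g₀)
    (a : ℕ → ℝ) (ha : ∀ n, 0 ≤ a n)
    (g : ℕ → ℝ → ℝ)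
    (hg_nonneg : ∀ n, 1 ≤ n → ∀ t, 0 ≤ t → 0 ≤ g n t)
    (hg_cont : ∀ n, 1 ≤ n → ContinuousOn (g n) (Set.Ici 0))
    (h1 : ∀ t, 0 ≤ t → g 1 t ≤ a 0 + g₀ * ∫ t' in Set.Ioc 0 t, μ t')
    (hrec : ∀ n, 1 ≤ n → ∀ t, 0 ≤ t →
      g (n + 1) t ≤ a n + ∫ t' in Set.Ioc 0 t, μ t' * g n t') :
    ∀ n : ℕ, ∀ t, 0 ≤ t →
      g (n + 1) t ≤
        (∑ k ∈ Finset.range (n + 1),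
          a (n - k) * (∫ t' in Set.Ici (0:ℝ), μ t') ^ k / Nat.factorial k) +
        g₀ * (∫ t' in Set.Ici (0:ℝ), μ t') ^ (n + 1) / Nat.factorial (n + 1) :=
  stmt_0_general μ hμ_int hμ_nonneg g₀ hg₀ a ha g hg_nonneg h1 hrec
end

section
/- Let C ≥ 0, L ≥ 0 and g₀ ≥ 0 be real numbers. Then the sequence whose n-th term is Σ_{k=0}^{n} C·2^{-(n-k)}·Lᵏ/k! + g₀·L^{n+1}/(n+1)! tends to 0 as n → ∞. -/
/-- The bound from Lemma 3.1 with aₙ = C·2^{-n} tends to 0. -/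
theorem stmt_2 (C L g₀ : ℝ) (hC : 0 ≤ C) (hL : 0 ≤ L) (hg₀ : 0 ≤ g₀) :
    Filter.Tendsto
      (fun n : ℕ =>
        (∑ k ∈ Finset.range (n + 1), C * (1 / 2 : ℝ) ^ (n - k) * L ^ k / Nat.factorial k) +
          g₀ * L ^ (n + 1) / Nat.factorial (n + 1))
      Filter.atTop (nhds 0) := by
  have h1 : Filter.Tendsto
      (fun n : ℕ => ∑ k ∈ Finset.range (n + 1),
        C * (1 / 2 : ℝ) ^ (n - k) * L ^ k / Nat.factorial k)
      Filter.atTop (nhds 0) := by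
    have hf : Summable fun k : ℕ => ‖C * L ^ k / Nat.factorial k‖ := by
      have := (Real.summable_pow_div_factorial L).mul_left C
      exact this.abs.congr (fun k => by rw [Real.norm_eq_abs]; ring_nf)
    have hg : Summable fun k : ℕ => ‖(1 / 2 : ℝ) ^ k‖ := by
      apply (summable_geometric_of_lt_one (r := (1/2:ℝ)) (by norm_num) (by norm_num)).abs.congr
      intro k; rw [Real.norm_eq_abs, abs_pow]
    have hsum := summable_norm_sum_mul_range_of_summable_norm hf hg
    have := hsum.of_norm.tendsto_atTop_zero
    refine this.congr fun n => Finset.sum_congr rfl fun k _ => by ring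
  have h2 : Filter.Tendsto (fun n : ℕ => g₀ * L ^ (n + 1) / Nat.factorial (n + 1))
      Filter.atTop (nhds 0) := by
    have := (FloorSemiring.tendsto_pow_div_factorial_atTop (K := ℝ) L).comp
      (Filter.tendsto_add_atTop_nat 1)
    have := this.const_mul g₀
    simpa [mul_div_assoc, Function.comp] using this
  simpa using h1.add h2
end

section
/- For every real constant C > 0 and every x ∈ (0,1], one has x·log(e + C/x) ≤ log(e + C)·(1 − log x). -/
/-- For C > 0 and x ∈ (0,1]: x·log(e + C/x) ≤ log(e + C)·(1 − log x). -/
theorem stmt_5 (C : ℝ) (hC : 0 < C) (x : ℝ) (hx : x ∈ Set.Ioc (0:ℝ) 1) :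
    x * Real.log (Real.exp 1 + C / x) ≤ Real.log (Real.exp 1 + C) * (1 - Real.log x) := by
  obtain ⟨hx0, hx1⟩ := hx
  have he := Real.exp_pos 1
  have hL : 1 ≤ Real.log (Real.exp 1 + C) := by
    calc 1 = Real.log (Real.exp 1) := (Real.log_exp 1).symm
    _ ≤ _ := Real.log_le_log he (by linarith)
  have hlx : Real.log x ≤ 0 := Real.log_nonpos hx0.le hx1
  have h1 : Real.log (Real.exp 1 + C / x) ≤ Real.log (Real.exp 1 + C) - Real.log x := by
    rw [← Real.log_div (by positivity) (ne_of_gt hx0)]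
    apply Real.log_le_log (by positivity)
    rw [add_div]
    have : Real.exp 1 ≤ Real.exp 1 / x := by
      rw [le_div_iff₀ hx0]; nlinarith
    linarith
  nlinarith [mul_le_mul_of_nonneg_left h1 hx0.le,
    mul_le_mul_of_nonneg_left hL (neg_nonneg.2 hlx)]
end

section
/- Let A > 0 and K > 0, let g : [0,∞) → [0,∞) be locally Lebesgue integrable, and let S : [0,∞) → [0,A] be continuous with S(0) > 0 and satisfy S(t) ≤ S(0) + K·∫₀ᵗ g(τ)·F_A(S(τ)) dτ for all t ≥ 0. Then for every t ≥ 0, S(t)/(eA) ≤ (S(0)/(eA))^{σ(t)}, where σ(t) = exp(−K·log(e+1)·∫₀ᵗ g(τ) dτ). -/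
/-!
Put `M(x) = x (1 + log A - log x) = x log (e A / x)` on `(0, A]`. There `F_A ≤ log (e + 1) · M`,
`M` is increasing, and `-log (1 + log A - log x)` is a primitive of `1 / M`. Hence `S` is dominated
by `ρ(t) = S(0) + K log (e + 1) ∫₀ᵗ g M(S)`, and Bihari's argument bounds `∫_{S(0)}^{ρ(t)} dx / M`
by `K log (e + 1) ∫₀ᵗ g`: over a short time step `ρ` grows by at most `M(ρ)` times the increment
of `K log (e + 1) ∫ g`, and `M ∘ ρ` is uniformly continuous, so summing over a fine partition gives
the bound up to a factor `1 + η`, for every `η > 0`. Exponentiating the resulting inequality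
`log (1 + log A - log S(0)) - log (1 + log A - log S(t)) ≤ K log (e + 1) ∫₀ᵗ g` twice gives the
claim.
-/

open MeasureTheory

/-- The Osgood modulus F_A(x) = x·log(e + A/x) for x ∈ (0,A], F_A(0) = 0. -/
noncomputable def osgoodMod (A : ℝ) : ℝ → ℝ :=
  fun x => if x = 0 then 0 else x * Real.log (Real.exp 1 + A / x)

open Set Real

theorem le_of_forall_short_step_le {h : ℝ → ℝ} {a b δ : ℝ} (hab : a ≤ b) (hδ : 0 < δ)
    (hh : ∀ u v, a ≤ u → u ≤ v → v ≤ b → v - u < δ → h v ≤ h u) : h b ≤ h a := by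
  obtain ⟨n, hn⟩ := exists_nat_gt ((b - a) / δ)
  have hn0 : (0 : ℝ) < n := (div_nonneg (sub_nonneg.2 hab) hδ.le).trans_lt hn
  set d := (b - a) / n
  have hd : 0 ≤ d := div_nonneg (sub_nonneg.2 hab) hn0.le
  have hdδ : d < δ := by
    rw [div_lt_iff₀ hn0]; rw [div_lt_iff₀ hδ] at hn; linarith
  have hnd : a + n * d = b := by simp only [d]; field_simp; ring
  have hsum : ∑ k ∈ Finset.range n, (h (a + (k + 1 : ℕ) * d) - h (a + k * d)) ≤ 0 := by
    refine Finset.sum_nonpos fun k hk => sub_nonpos.2 (hh _ _ ?_ ?_ ?_ ?_)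
    · have : (0 : ℝ) ≤ k * d := by positivity
      linarith
    · push_cast; nlinarith
    · have : ((k + 1 : ℕ) : ℝ) ≤ n := by exact_mod_cast Finset.mem_range.1 hk
      nlinarith
    · push_cast; linarith
  rw [Finset.sum_range_sub (fun k : ℕ => h (a + k * d)), hnd] at hsum
  simpa using hsum

theorem intervalIntegrable_inv_of_monotoneOn {ω : ℝ → ℝ} {c x y : ℝ}
    (hω : ContinuousOn ω (Ici c)) (hω_mono : MonotoneOn ω (Ici c)) (hωc : 0 < ω c)
    (hx : c ≤ x) (hy : c ≤ y) : IntervalIntegrable (fun s => (ω s)⁻¹) volume x y := by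
  refine ContinuousOn.intervalIntegrable ((hω.inv₀ fun s hs => ?_).mono fun s hs => ?_)
  · exact (hωc.trans_le (hω_mono self_mem_Ici hs hs)).ne'
  · exact (le_min hx hy).trans hs.1

theorem integral_inv_le_of_monotoneOn {ω : ℝ → ℝ} {c x y : ℝ}
    (hω : ContinuousOn ω (Ici c)) (hω_mono : MonotoneOn ω (Ici c)) (hωc : 0 < ω c)
    (hx : c ≤ x) (hxy : x ≤ y) : ∫ s in x..y, (ω s)⁻¹ ≤ (y - x) * (ω x)⁻¹ := by
  have hωx : 0 < ω x := hωc.trans_le (hω_mono self_mem_Ici hx hx)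
  calc ∫ s in x..y, (ω s)⁻¹ ≤ ∫ _ in x..y, (ω x)⁻¹ := by
        refine intervalIntegral.integral_mono_on hxy
          (intervalIntegrable_inv_of_monotoneOn hω hω_mono hωc hx (hx.trans hxy))
          intervalIntegrable_const fun s hs => ?_
        exact inv_anti₀ hωx (hω_mono hx (hx.trans hs.1) hs.1)
    _ = (y - x) * (ω x)⁻¹ := by simp

theorem integral_inv_le_of_sub_le_mul {ω : ℝ → ℝ} {c x y d η : ℝ}
    (hω : ContinuousOn ω (Ici c)) (hω_mono : MonotoneOn ω (Ici c)) (hωc : 0 < ω c)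
    (hx : c ≤ x) (hxy : x ≤ y) (hd : 0 ≤ d) (hinc : y - x ≤ ω y * d)
    (hωy : ω y ≤ (1 + η) * ω x) : ∫ s in x..y, (ω s)⁻¹ ≤ (1 + η) * d := by
  have hωx : 0 < ω x := hωc.trans_le (hω_mono self_mem_Ici hx hx)
  calc ∫ s in x..y, (ω s)⁻¹ ≤ (y - x) * (ω x)⁻¹ :=
        integral_inv_le_of_monotoneOn hω hω_mono hωc hx hxy
    _ ≤ (1 + η) * ω x * d * (ω x)⁻¹ :=
        mul_le_mul_of_nonneg_right (hinc.trans (mul_le_mul_of_nonneg_right hωy hd))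
          (inv_nonneg.2 hωx.le)
    _ = (1 + η) * d := by field_simp

theorem sub_le_sub_of_forall_short_step_le {Φ G : ℝ → ℝ} {a b : ℝ} (hab : a ≤ b)
    (hG : G a ≤ G b) (hstep : ∀ η > 0, ∃ δ > 0, ∀ u v, a ≤ u → u ≤ v → v ≤ b → v - u < δ →
      Φ v - Φ u ≤ (1 + η) * (G v - G u)) :
    Φ b - Φ a ≤ G b - G a := by
  refine le_of_forall_pos_le_add fun ε hε => ?_
  obtain ⟨δ, hδ, hstepδ⟩ := hstep (ε / (G b - G a + 1)) (div_pos hε (by linarith))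
  have := le_of_forall_short_step_le (h := fun u => Φ u - (1 + ε / (G b - G a + 1)) * G u)
    hab hδ fun u v hu huv hvb hvu => by linear_combination hstepδ u v hu huv hvb hvu
  have hε : ε / (G b - G a + 1) * (G b - G a) ≤ ε := by
    rw [div_mul_eq_mul_div, div_le_iff₀ (by linarith)]; nlinarith
  linear_combination this + hε

theorem integral_inv_le_sub_of_sub_le_mul_sub {ω ρ G : ℝ → ℝ} {a b : ℝ} (hab : a ≤ b)
    (hω : ContinuousOn ω (Ici (ρ a))) (hω_mono : MonotoneOn ω (Ici (ρ a)))
    (hωa : 0 < ω (ρ a)) (hρ : ContinuousOn ρ (Icc a b)) (hρ_mono : MonotoneOn ρ (Icc a b))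
    (hinc : ∀ u v, a ≤ u → u ≤ v → v ≤ b → ρ v - ρ u ≤ ω (ρ v) * (G v - G u)) :
    ∫ x in ρ a..ρ b, (ω x)⁻¹ ≤ G b - G a := by
  have hρa : ∀ u, a ≤ u → u ≤ b → ρ a ≤ ρ u := fun u hu hub =>
    hρ_mono (left_mem_Icc.2 hab) ⟨hu, hub⟩ hu
  have hωρ : ∀ u, a ≤ u → u ≤ b → ω (ρ a) ≤ ω (ρ u) := fun u hu hub =>
    hω_mono self_mem_Ici (hρa u hu hub) (hρa u hu hub)
  have hG : ∀ u v, a ≤ u → u ≤ v → v ≤ b → 0 ≤ G v - G u := fun u v hu huv hvb =>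
    (mul_nonneg_iff_of_pos_left (hωa.trans_le (hωρ v (hu.trans huv) hvb))).1 <|
      (sub_nonneg.2 (hρ_mono ⟨hu, huv.trans hvb⟩ ⟨hu.trans huv, hvb⟩ huv)).trans
        (hinc u v hu huv hvb)
  have key := sub_le_sub_of_forall_short_step_le (Φ := fun u => ∫ x in ρ a..ρ u, (ω x)⁻¹) hab
    (sub_nonneg.1 (hG a b le_rfl hab le_rfl)) fun η hη => ?_
  · simpa using key
  -- On short steps `ω ∘ ρ` varies by a factor at most `1 + η`, by uniform continuity.
  obtain ⟨δ, hδ, hclose⟩ := Metric.uniformContinuousOn_iff.1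
    (isCompact_Icc.uniformContinuousOn_of_continuous ((hω.comp hρ) fun u hu => hρa u hu.1 hu.2))
    (η * ω (ρ a)) (mul_pos hη hωa)
  refine ⟨δ, hδ, fun u v hu huv hvb hvu => ?_⟩
  have hωv : ω (ρ v) ≤ (1 + η) * ω (ρ u) := by
    have := (le_abs_self _).trans_lt (hclose v ⟨hu.trans huv, hvb⟩ u ⟨hu, huv.trans hvb⟩
      (by rw [Real.dist_eq, abs_of_nonneg (sub_nonneg.2 huv)]; exact hvu))
    simp only [Function.comp_apply] at this
    nlinarith [hωρ u hu (huv.trans hvb)]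
  rw [intervalIntegral.integral_interval_sub_left
    (intervalIntegrable_inv_of_monotoneOn hω hω_mono hωa le_rfl (hρa v (hu.trans huv) hvb))
    (intervalIntegrable_inv_of_monotoneOn hω hω_mono hωa le_rfl (hρa u hu (huv.trans hvb)))]
  exact integral_inv_le_of_sub_le_mul hω hω_mono hωa (hρa u hu (huv.trans hvb))
    (hρ_mono ⟨hu, huv.trans hvb⟩ ⟨hu.trans huv, hvb⟩ huv) (hG u v hu huv hvb)
    (hinc u v hu huv hvb) hωv

theorem integral_inv_le_integral_of_le_add_integral {ω g S : ℝ → ℝ} {a t : ℝ} (ha : 0 ≤ a)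
    (ht : 0 ≤ t) (hω : Continuous ω) (hω_mono : MonotoneOn ω (Ici 0))
    (hω_nonneg : ∀ x, 0 ≤ x → 0 ≤ ω x) (hωa : 0 < ω a)
    (hg : IntegrableOn g (Icc 0 t)) (hg_nonneg : ∀ τ ∈ Icc 0 t, 0 ≤ g τ)
    (hS : ContinuousOn S (Icc 0 t)) (hS_nonneg : ∀ τ ∈ Icc 0 t, 0 ≤ S τ)
    (hS_le : ∀ u ∈ Icc 0 t, S u ≤ a + ∫ τ in 0..u, g τ * ω (S τ)) :
    ∫ x in a..a + ∫ τ in 0..t, g τ * ω (S τ), (ω x)⁻¹ ≤ ∫ τ in 0..t, g τ := by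
  set ρ := fun u => a + ∫ τ in 0..u, g τ * ω (S τ) with hρ_def
  have hgω : IntegrableOn (fun τ => g τ * ω (S τ)) (Icc 0 t) :=
    hg.mul_continuousOn (hω.comp_continuousOn hS) isCompact_Icc
  have hρ_sub : ∀ {u v}, u ∈ Icc 0 t → v ∈ Icc 0 t →
      ρ v - ρ u = ∫ τ in u..v, g τ * ω (S τ) := fun hu hv => by
    simp only [hρ_def, add_sub_add_left_eq_sub]
    exact intervalIntegral.integral_interval_sub_left
      ((hgω.mono_set (uIcc_subset_Icc (left_mem_Icc.2 ht) hv)).intervalIntegrable)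
      ((hgω.mono_set (uIcc_subset_Icc (left_mem_Icc.2 ht) hu)).intervalIntegrable)
  have hρ_mono : MonotoneOn ρ (Icc 0 t) := fun u hu v hv huv => by
    refine sub_nonneg.1 ((hρ_sub hu hv).symm ▸ intervalIntegral.integral_nonneg huv fun τ hτ => ?_)
    have hτ : τ ∈ Icc 0 t := ⟨hu.1.trans hτ.1, hτ.2.trans hv.2⟩
    exact mul_nonneg (hg_nonneg τ hτ) (hω_nonneg _ (hS_nonneg τ hτ))
  have hρ0 : ρ 0 = a := by simp [hρ_def]
  have key := integral_inv_le_sub_of_sub_le_mul_sub (ρ := ρ)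
    (G := fun u => ∫ τ in 0..u, g τ) ht (hρ0 ▸ hω.continuousOn)
    (hρ0 ▸ hω_mono.mono (Ici_subset_Ici.2 ha)) (hρ0 ▸ hωa) ?_ hρ_mono ?_
  · simpa [hρ0] using key
  · have := intervalIntegral.continuousOn_primitive_interval (hgω.mono_set (uIcc_of_le ht).le)
    rw [uIcc_of_le ht] at this
    exact continuousOn_const.add this
  · intro u v hu huv hvt
    have hu' : u ∈ Icc 0 t := ⟨hu, huv.trans hvt⟩
    have hv' : v ∈ Icc 0 t := ⟨hu.trans huv, hvt⟩
    have hρv : 0 ≤ ρ v := ha.trans (hρ0 ▸ hρ_mono (left_mem_Icc.2 ht) hv' hv'.1)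
    have hg_int : ∀ {w}, w ∈ Icc 0 t → IntervalIntegrable g volume 0 w := fun hw =>
      (hg.mono_set (uIcc_subset_Icc (left_mem_Icc.2 ht) hw)).intervalIntegrable
    rw [hρ_sub hu' hv', intervalIntegral.integral_interval_sub_left (hg_int hv') (hg_int hu'),
      ← intervalIntegral.integral_const_mul]
    refine intervalIntegral.integral_mono_on huv
      (hgω.mono_set (uIcc_subset_Icc hu' hv')).intervalIntegrable
      ((hg.mono_set (uIcc_subset_Icc hu' hv')).intervalIntegrable.const_mul _) fun τ hτ => ?_
    have hτ' : τ ∈ Icc 0 t := ⟨hu.trans hτ.1, hτ.2.trans hvt⟩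
    have hSρ : S τ ≤ ρ v := (hS_le τ hτ').trans (hρ_mono hτ' hv' hτ.2)
    rw [mul_comm]
    exact mul_le_mul_of_nonneg_right (hω_mono (hS_nonneg τ hτ') hρv hSρ) (hg_nonneg τ hτ')

/-- Equal to `x log (e A / x)` on `[0, A]` (with value `0` at `0`, as `log 0 = 0`) and to `A`
beyond `A`. -/
noncomputable def osgoodMajorant (A s : ℝ) : ℝ :=
  min s A * (1 + log A - log (min s A))

section osgoodMajorant

variable {A a b s : ℝ}

theorem one_le_one_add_log_sub_log (hs : 0 < s) (hsA : s ≤ A) : 1 ≤ 1 + log A - log s := by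
  linarith [log_le_log hs hsA]

theorem osgoodMajorant_of_le (hsA : s ≤ A) : osgoodMajorant A s = s * (1 + log A - log s) := by
  rw [osgoodMajorant, min_eq_left hsA]

theorem continuous_osgoodMajorant (A : ℝ) : Continuous (osgoodMajorant A) := by
  have h : Continuous fun y => y * (1 + log A) - y * log y :=
    (continuous_id.mul continuous_const).sub continuous_mul_log
  refine Continuous.comp (g := fun y => y * (1 + log A - log y)) ?_
    (continuous_id.min continuous_const)
  simpa only [mul_sub] using h

theorem mul_one_add_log_sub_log_le {x y : ℝ} (hx : 0 ≤ x) (hxy : x ≤ y) (hyA : y ≤ A) :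
    x * (1 + log A - log x) ≤ y * (1 + log A - log y) := by
  rcases hx.eq_or_lt with rfl | hx
  · rcases hxy.eq_or_lt with rfl | hy
    · simp
    · simpa using mul_nonneg hy.le (zero_le_one.trans (one_le_one_add_log_sub_log hy hyA))
  -- With `L z = 1 + log A - log z ≥ 1`: `y L y - x L x = (y - x) L y - x log (y / x)`, and
  -- `x log (y / x) ≤ y - x`.
  have hlog : x * (log y - log x) ≤ y - x := by
    have := log_le_sub_one_of_pos (div_pos (hx.trans_le hxy) hx)
    rw [log_div (hx.trans_le hxy).ne' hx.ne'] at this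
    calc x * (log y - log x) ≤ x * (y / x - 1) := mul_le_mul_of_nonneg_left this hx.le
      _ = y - x := by field_simp
  nlinarith [one_le_one_add_log_sub_log (hx.trans_le hxy) hyA]

theorem monotoneOn_osgoodMajorant (hA : 0 < A) : MonotoneOn (osgoodMajorant A) (Ici 0) :=
  fun _ hx _ _ hxy =>
    mul_one_add_log_sub_log_le (le_min hx hA.le) (min_le_min_right A hxy) (min_le_right _ _)

theorem osgoodMajorant_nonneg (hA : 0 < A) (hs : 0 ≤ s) : 0 ≤ osgoodMajorant A s := by
  simpa [osgoodMajorant, hA.le] using monotoneOn_osgoodMajorant hA self_mem_Ici hs hs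

theorem osgoodMajorant_pos (hA : 0 < A) (hs : 0 < s) : 0 < osgoodMajorant A s :=
  mul_pos (lt_min hs hA)
    (zero_lt_one.trans_le (one_le_one_add_log_sub_log (lt_min hs hA) (min_le_right _ _)))

theorem osgoodMod_nonneg (hA : 0 ≤ A) (hs : 0 ≤ s) : 0 ≤ osgoodMod A s := by
  unfold osgoodMod
  split_ifs
  · exact le_rfl
  · have : 1 ≤ exp 1 + A / s := by
      linarith [add_one_le_exp 1, div_nonneg hA hs]
    exact mul_nonneg hs (log_nonneg this)

theorem osgoodMod_le_log_mul_osgoodMajorant (hA : 0 < A) (hs : 0 ≤ s) (hsA : s ≤ A) :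
    osgoodMod A s ≤ log (exp 1 + 1) * osgoodMajorant A s := by
  rcases hs.eq_or_lt with rfl | hs
  · simp [osgoodMod, osgoodMajorant, hA.le]
  rw [osgoodMod, if_neg hs.ne', osgoodMajorant_of_le hsA]
  have hAs : 1 ≤ A / s := (one_le_div hs).2 hsA
  have he1 : 1 ≤ log (exp 1 + 1) := by
    simpa using log_le_log (exp_pos 1) (show exp 1 ≤ exp 1 + 1 by linarith)
  -- `e + A / s ≤ (e + 1) A / s` as `A / s ≥ 1`
  have hlog : log (exp 1 + A / s) ≤ log (exp 1 + 1) + (log A - log s) := by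
    rw [← log_div hA.ne' hs.ne', ← log_mul (by positivity) (by positivity)]
    exact log_le_log (by positivity) (by nlinarith [exp_pos 1])
  have hAs' : 0 ≤ log A - log s := by
    rw [← log_div hA.ne' hs.ne']; exact log_nonneg hAs
  have : log (exp 1 + A / s) ≤ log (exp 1 + 1) * (1 + log A - log s) := by nlinarith
  nlinarith

theorem setIntegral_mul_osgoodMod_le {g S : ℝ → ℝ} {I : Set ℝ} (hA : 0 < A)
    (hI : MeasurableSet I) (hg : ∀ τ ∈ I, 0 ≤ g τ) (hS : ∀ τ ∈ I, S τ ∈ Icc 0 A)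
    (hgS : IntegrableOn (fun τ => g τ * osgoodMajorant A (S τ)) I) :
    ∫ τ in I, g τ * osgoodMod A (S τ) ≤
      log (exp 1 + 1) * ∫ τ in I, g τ * osgoodMajorant A (S τ) := by
  rw [← integral_const_mul]
  refine integral_mono_of_nonneg ?_ (hgS.const_mul _) ?_
  all_goals refine ae_restrict_of_forall_mem hI fun τ hτ => ?_
  · exact mul_nonneg (hg τ hτ) (osgoodMod_nonneg hA.le (hS τ hτ).1)
  · simp only [mul_left_comm (log _)]
    exact mul_le_mul_of_nonneg_left
      (osgoodMod_le_log_mul_osgoodMajorant hA (hS τ hτ).1 (hS τ hτ).2) (hg τ hτ)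

theorem le_add_integral_osgoodMajorant {g S : ℝ → ℝ} {K u x y : ℝ} (hA : 0 < A) (hK : 0 ≤ K)
    (hu : 0 ≤ u) (hg : ∀ τ ∈ Ioc 0 u, 0 ≤ g τ) (hS : ∀ τ ∈ Ioc 0 u, S τ ∈ Icc 0 A)
    (hgS : IntegrableOn (fun τ => g τ * osgoodMajorant A (S τ)) (Ioc 0 u))
    (h : x ≤ y + K * ∫ τ in Ioc 0 u, g τ * osgoodMod A (S τ)) :
    x ≤ y + ∫ τ in 0..u, K * log (exp 1 + 1) * g τ * osgoodMajorant A (S τ) :=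
  calc x ≤ y + K * ∫ τ in Ioc 0 u, g τ * osgoodMod A (S τ) := h
    _ ≤ y + K * (log (exp 1 + 1) * ∫ τ in Ioc 0 u, g τ * osgoodMajorant A (S τ)) := by
        gcongr
        exact setIntegral_mul_osgoodMod_le hA measurableSet_Ioc hg hS hgS
    _ = y + ∫ τ in 0..u, K * log (exp 1 + 1) * g τ * osgoodMajorant A (S τ) := by
        rw [intervalIntegral.integral_of_le hu, ← mul_assoc, ← integral_const_mul]
        simp only [mul_assoc]

theorem intervalIntegrable_inv_osgoodMajorant (hA : 0 < A) (ha : 0 < a) (hab : a ≤ b) :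
    IntervalIntegrable (fun x => (osgoodMajorant A x)⁻¹) volume a b :=
  intervalIntegrable_inv_of_monotoneOn (continuous_osgoodMajorant A).continuousOn
    ((monotoneOn_osgoodMajorant hA).mono (Ici_subset_Ici.2 ha.le)) (osgoodMajorant_pos hA ha)
    le_rfl hab

theorem integral_inv_osgoodMajorant (ha : 0 < a) (hab : a ≤ b) (hbA : b ≤ A) :
    ∫ x in a..b, (osgoodMajorant A x)⁻¹ = log (1 + log A - log a) - log (1 + log A - log b) := by
  have hA : 0 < A := ha.trans_le (hab.trans hbA)
  have hderiv : ∀ x ∈ uIcc a b,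
      HasDerivAt (fun x => -log (1 + log A - log x)) (osgoodMajorant A x)⁻¹ x := by
    intro x hx
    rw [uIcc_of_le hab] at hx
    have hx0 : 0 < x := ha.trans_le hx.1
    have hL := one_le_one_add_log_sub_log hx0 (hx.2.trans hbA)
    refine (((hasDerivAt_log hx0.ne').const_sub (1 + log A)).log (by linarith)).neg.congr_deriv ?_
    rw [osgoodMajorant_of_le (hx.2.trans hbA)]
    field_simp
  rw [intervalIntegral.integral_eq_sub_of_hasDerivAt hderiv]
  · ring
  · exact intervalIntegrable_inv_osgoodMajorant hA ha hab

theorem div_le_rpow_of_integral_inv_osgoodMajorant_le {κ : ℝ} (ha : 0 < a) (haA : a ≤ A)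
    (hab : a ≤ b) (hsb : s ≤ b) (hsA : s ≤ A) (h : ∫ x in a..b, (osgoodMajorant A x)⁻¹ ≤ κ) :
    s / (exp 1 * A) ≤ (a / (exp 1 * A)) ^ exp (-κ) := by
  have hA : 0 < A := ha.trans_le haA
  set b' := min b A
  have hab' : a ≤ b' := le_min hab haA
  have hb' : 0 < b' := ha.trans_le hab'
  have h' : ∫ x in a..b', (osgoodMajorant A x)⁻¹ ≤ κ := by
    refine le_trans (intervalIntegral.integral_mono_interval le_rfl hab' (min_le_left _ _) ?_ ?_) h
    · exact ae_restrict_of_forall_mem measurableSet_Ioc fun x hx =>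
        inv_nonneg.2 (osgoodMajorant_nonneg hA (ha.le.trans hx.1.le))
    · exact intervalIntegrable_inv_osgoodMajorant hA ha hab
  rw [integral_inv_osgoodMajorant ha hab' (min_le_right _ _)] at h'
  set La := 1 + log A - log a
  set Lb := 1 + log A - log b'
  have hLa : 1 ≤ La := one_le_one_add_log_sub_log ha haA
  have hLb : 1 ≤ Lb := one_le_one_add_log_sub_log hb' (min_le_right _ _)
  have hL : La * exp (-κ) ≤ Lb := by
    rw [exp_neg, ← div_eq_mul_inv, div_le_iff₀ (exp_pos κ), ← exp_log (by linarith : 0 < La),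
      ← exp_log (by linarith : 0 < Lb), ← exp_add]
    exact exp_le_exp.2 (by linarith)
  have hlog : ∀ {x}, 0 < x → log (x / (exp 1 * A)) = -(1 + log A - log x) := fun hx => by
    rw [log_div hx.ne' (by positivity), log_mul (exp_pos 1).ne' hA.ne', log_exp]; ring
  calc s / (exp 1 * A) ≤ b' / (exp 1 * A) := by gcongr; exact le_min hsb hsA
    _ = exp (-Lb) := by rw [← hlog hb', exp_log (by positivity)]
    _ ≤ exp (-La * exp (-κ)) := exp_le_exp.2 (by linarith)
    _ = (a / (exp 1 * A)) ^ exp (-κ) := by rw [rpow_def_of_pos (by positivity), hlog ha]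

end osgoodMajorant

/-- Quantitative Osgood estimate: if S : [0,∞) → [0,A] is continuous, S(0) > 0 and
S(t) ≤ S(0) + K·∫₀ᵗ g(τ)·F_A(S(τ)) dτ, then
S(t)/(eA) ≤ (S(0)/(eA))^{σ(t)} with σ(t) = exp(−K·log(e+1)·∫₀ᵗ g). -/
theorem stmt_10 (A K : ℝ) (hA : 0 < A) (hK : 0 < K)
    (g : ℝ → ℝ) (hg_nonneg : ∀ t, 0 ≤ t → 0 ≤ g t)
    (hg_loc : ∀ T, 0 < T → IntegrableOn g (Set.Icc 0 T))
    (S : ℝ → ℝ) (hS_cont : ContinuousOn S (Set.Ici 0))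
    (hS_mem : ∀ t, 0 ≤ t → S t ∈ Set.Icc 0 A) (hS0 : 0 < S 0)
    (hS : ∀ t, 0 ≤ t → S t ≤ S 0 + K * ∫ τ in Set.Ioc 0 t, g τ * osgoodMod A (S τ)) :
    ∀ t, 0 ≤ t →
      S t / (Real.exp 1 * A) ≤
        (S 0 / (Real.exp 1 * A)) ^
          (Real.exp (-K * Real.log (Real.exp 1 + 1) * ∫ τ in Set.Ioc 0 t, g τ)) := by
  intro t ht
  have hC : 0 ≤ K * log (exp 1 + 1) :=
    mul_nonneg hK.le (log_nonneg (by linarith [add_one_le_exp 1]))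
  have hSt : ContinuousOn S (Icc 0 t) := hS_cont.mono Icc_subset_Ici_self
  have hg : IntegrableOn g (Icc 0 t) :=
    (hg_loc (t + 1) (by linarith)).mono_set (Icc_subset_Icc_right (by linarith))
  have hgM : IntegrableOn (fun τ => g τ * osgoodMajorant A (S τ)) (Icc 0 t) :=
    hg.mul_continuousOn ((continuous_osgoodMajorant A).comp_continuousOn hSt) isCompact_Icc
  have hS_le : ∀ u ∈ Icc 0 t,
      S u ≤ S 0 + ∫ τ in 0..u, K * log (exp 1 + 1) * g τ * osgoodMajorant A (S τ) :=
    fun u hu => le_add_integral_osgoodMajorant hA hK.le hu.1 (fun τ hτ => hg_nonneg τ hτ.1.le)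
      (fun τ hτ => hS_mem τ hτ.1.le)
      (hgM.mono_set (Ioc_subset_Icc_self.trans (Icc_subset_Icc_right hu.2))) (hS u hu.1)
  have hS0_le : S 0 ≤ S 0 + ∫ τ in 0..t, K * log (exp 1 + 1) * g τ * osgoodMajorant A (S τ) :=
    le_add_of_nonneg_right (intervalIntegral.integral_nonneg ht fun τ hτ =>
      mul_nonneg (mul_nonneg hC (hg_nonneg τ hτ.1)) (osgoodMajorant_nonneg hA (hS_mem τ hτ.1).1))
  have hbihari := integral_inv_le_integral_of_le_add_integral hS0.le ht
    (continuous_osgoodMajorant A) (monotoneOn_osgoodMajorant hA)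
    (fun x hx => osgoodMajorant_nonneg hA hx) (osgoodMajorant_pos hA hS0) (hg.const_mul _)
    (fun τ hτ => mul_nonneg hC (hg_nonneg τ hτ.1)) hSt (fun τ hτ => (hS_mem τ hτ.1).1) hS_le
  rw [intervalIntegral.integral_const_mul, intervalIntegral.integral_of_le ht (f := g)] at hbihari
  convert div_le_rpow_of_integral_inv_osgoodMajorant_le hS0 (hS_mem 0 le_rfl).2 hS0_le
    (hS_le t ⟨ht, le_rfl⟩) (hS_mem t ht).2 hbihari using 3
  ring
end

section
/- Let A > 0 and let 0 < S₀ ≤ S₁ ≤ A. Then ∫_{S₀}^{S₁} dr / (r·log(e + A/r)) ≥ (1/log(e+1))·log( (1 − log(S₀/A)) / (1 − log(S₁/A)) ). -/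
/-!
Since `e + t ≤ (e + 1) t` and `1 ≤ log (e + 1)`, we have `log (e + t) ≤ log (e + 1) (1 + log t)`
for `t ≥ 1`. Hence on `(0, A]` the integrand `1 / (r log (e + A/r))` dominates
`1 / (log (e + 1) r (1 - log (r/A)))`, which is the derivative of `-log (1 - log (r/A)) / log (e + 1)`.
-/

open Real Set

lemma one_le_log_exp_one_add_one : 1 ≤ log (exp 1 + 1) := by
  simpa using log_le_log (exp_pos 1) (le_add_of_nonneg_right zero_le_one)

lemma log_exp_one_add_le {t : ℝ} (ht : 1 ≤ t) :
    log (exp 1 + t) ≤ log (exp 1 + 1) * (1 + log t) :=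
  calc log (exp 1 + t)
      ≤ log ((exp 1 + 1) * t) := log_le_log (by positivity) (by nlinarith [exp_pos 1])
    _ = log (exp 1 + 1) + log t := log_mul (by positivity) (by positivity)
    _ ≤ log (exp 1 + 1) * (1 + log t) := by
      nlinarith [one_le_log_exp_one_add_one, log_nonneg ht]

lemma one_le_one_sub_log_div {r A : ℝ} (hr : 0 < r) (hrA : r ≤ A) : 1 ≤ 1 - log (r / A) := by
  have hA : 0 < A := hr.trans_le hrA
  linarith [log_nonpos (div_pos hr hA).le ((div_le_one hA).mpr hrA)]

lemma one_div_mul_one_sub_log_div_le {r A : ℝ} (hr : 0 < r) (hrA : r ≤ A) :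
    1 / (log (exp 1 + 1) * (r * (1 - log (r / A)))) ≤ 1 / (r * log (exp 1 + A / r)) := by
  have ht : 1 ≤ A / r := (one_le_div hr).mpr hrA
  have hlog : log (r / A) = -log (A / r) := by rw [← log_inv, inv_div]
  have hpos : 0 < log (exp 1 + A / r) := log_pos (by linarith [add_one_lt_exp one_ne_zero])
  apply one_div_le_one_div_of_le (by positivity)
  rw [hlog]
  nlinarith [log_exp_one_add_le ht]

lemma hasDerivAt_neg_log_one_sub_log_div {r A : ℝ} (hr : r ≠ 0) (hA : A ≠ 0)
    (h : 1 - log (r / A) ≠ 0) :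
    HasDerivAt (fun s ↦ -log (1 - log (s / A))) (1 / (r * (1 - log (r / A)))) r := by
  have hdiv : HasDerivAt (fun s ↦ log (s / A)) (1 / r) r := by
    convert ((hasDerivAt_id' r).div_const A).log (div_ne_zero hr hA) using 1
    field_simp
  exact ((hdiv.const_sub 1).log h).fun_neg.congr_deriv (by field_simp)

lemma continuousOn_one_div_mul_log_exp_one_add_div {A : ℝ} (hA : 0 ≤ A) :
    ContinuousOn (fun r ↦ 1 / (r * log (exp 1 + A / r))) (Ioi 0) := by
  intro r (hr0 : 0 < r)
  have hpos : 0 < log (exp 1 + A / r) := log_pos (by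
    have : 0 ≤ A / r := by positivity
    linarith [add_one_lt_exp one_ne_zero])
  apply ContinuousAt.continuousWithinAt
  fun_prop (disch := first | positivity | exact hr0.ne' | exact (mul_pos hr0 hpos).ne')

theorem stmt_11_general (A S₀ S₁ : ℝ) (h0 : 0 < S₀) (h01 : S₀ ≤ S₁) (h1A : S₁ ≤ A) :
    (1 / Real.log (Real.exp 1 + 1)) *
        Real.log ((1 - Real.log (S₀ / A)) / (1 - Real.log (S₁ / A)))
      ≤ ∫ r in S₀..S₁, 1 / (r * Real.log (Real.exp 1 + A / r)) := by
  have hA : 0 < A := h0.trans_le (h01.trans h1A)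
  set L := log (exp 1 + 1)
  have hF : ∀ r ∈ Icc S₀ S₁, HasDerivAt (fun s ↦ 1 / L * -log (1 - log (s / A)))
      (1 / (L * (r * (1 - log (r / A))))) r := fun r hr ↦ by
    have hu := one_le_one_sub_log_div (h0.trans_le hr.1) (hr.2.trans h1A)
    rw [← one_div_mul_one_div]
    exact (hasDerivAt_neg_log_one_sub_log_div (h0.trans_le hr.1).ne' hA.ne'
      (by linarith)).const_mul _
  have hFTC := intervalIntegral.sub_le_integral_of_hasDeriv_right_of_le h01
    (fun r hr ↦ (hF r hr).continuousAt.continuousWithinAt)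
    (fun r hr ↦ (hF r (Ioo_subset_Icc_self hr)).hasDerivWithinAt)
    ((continuousOn_one_div_mul_log_exp_one_add_div hA.le).mono
      fun r hr ↦ h0.trans_le hr.1).integrableOn_Icc
    (fun r hr ↦ one_div_mul_one_sub_log_div_le (h0.trans hr.1) (hr.2.le.trans h1A))
  convert hFTC using 1
  have hu₀ := one_le_one_sub_log_div h0 (h01.trans h1A)
  have hu₁ := one_le_one_sub_log_div (h0.trans_le h01) h1A
  rw [log_div (by positivity) (by positivity)]
  ring

/-- Lower bound on the Osgood integral:
∫_{S₀}^{S₁} dr/(r·log(e + A/r)) ≥ (1/log(e+1))·log((1 − log(S₀/A))/(1 − log(S₁/A))). -/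
theorem stmt_11 (A S₀ S₁ : ℝ) (hA : 0 < A) (h0 : 0 < S₀) (h01 : S₀ ≤ S₁) (h1A : S₁ ≤ A) :
    (1 / Real.log (Real.exp 1 + 1)) *
        Real.log ((1 - Real.log (S₀ / A)) / (1 - Real.log (S₁ / A)))
      ≤ ∫ r in S₀..S₁, 1 / (r * Real.log (Real.exp 1 + A / r)) :=
  stmt_11_general A S₀ S₁ h0 h01 h1A
end

section
/- Let T* ∈ (0,∞], let μ : [0,T*) → [0,∞) be locally Lebesgue integrable, let H₀ > 0, and let H : [0,T*) → [0,∞) be continuous and satisfy H(t) ≤ H₀ + ∫₀ᵗ μ(r)·H(r)³ dr for all t ∈ [0,T*). If sup_{t ∈ [0,T*)} H(t) = ∞, then ∫₀^{T*} μ(r) dr ≥ 1 / (2·H₀²). -/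
/-! With `Φ(t) = H₀ + ∫₀ᵗ μ H³` and `m(t) = ∫₀ᵗ μ`, the bounds `0 ≤ H ≤ Φ` and the monotonicity
of `Φ` give `Φ(y) - Φ(x) ≤ Φ(y)³ (m(y) - m(x))` for `x ≤ y`, the integrated form of `Φ' ≤ μ Φ³`.
By continuity of `Φ`, for every `κ > 1` and `y` slightly to the right of `x` this yields
`Φ(x)⁻² - Φ(y)⁻² ≤ 2κ (m(y) - m(x))`, and a continuous induction gives `Φ(t)⁻² ≥ H₀⁻² - 2 m(t)`,
the bound satisfied by the solution of `y' = μ y³`. If `∫₀^{T*} μ < 1/(2H₀²)` the right side stays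
above a positive constant, so `H ≤ Φ` is bounded. -/

open MeasureTheory Set Filter Topology intervalIntegral
open scoped ENNReal

section ContinuousInduction

variable {α β : Type*} [ConditionallyCompleteLinearOrder α] [TopologicalSpace α]
  [OrderTopology α] [DenselyOrdered α] [LinearOrder β] [TopologicalSpace β] [OrderClosedTopology β]

theorem le_of_forall_eventually_nhdsGT_le {f : α → β} {a b : α} (hab : a ≤ b)
    (hf : ContinuousOn f (Icc a b)) (hloc : ∀ x ∈ Ico a b, ∀ᶠ y in 𝓝[>] x, f x ≤ f y) :
    f a ≤ f b := by
  have hclosed : IsClosed ({y | f a ≤ f y} ∩ Icc a b) := by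
    rw [inter_comm]
    exact hf.preimage_isClosed_of_isClosed isClosed_Icc isClosed_Ici
  refine hclosed.Icc_subset_of_forall_mem_nhdsWithin le_rfl (fun x hx => ?_) ⟨hab, le_rfl⟩
  filter_upwards [hloc x hx.2] with y hy using hx.1.trans hy

end ContinuousInduction

theorem inv_sq_sub_inv_sq_le {p q d κ : ℝ} (hp : 0 < p) (hpq : p ≤ q)
    (hinc : q - p ≤ q ^ 3 * d) (hκ : q ^ 2 ≤ κ * p ^ 2) :
    (p ^ 2)⁻¹ - (q ^ 2)⁻¹ ≤ 2 * κ * d := by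
  have hq : 0 < q := hp.trans_le hpq
  have hd : 0 ≤ d := nonneg_of_mul_nonneg_right (a := q ^ 3) (by linarith) (by positivity)
  rw [inv_sub_inv (by positivity) (by positivity), div_le_iff₀ (by positivity)]
  calc q ^ 2 - p ^ 2 = (q - p) * (q + p) := by ring
    _ ≤ q ^ 3 * d * (2 * q) := by gcongr; linarith
    _ = 2 * d * q ^ 2 * q ^ 2 := by ring
    _ ≤ 2 * d * (κ * p ^ 2) * q ^ 2 := by gcongr
    _ = 2 * κ * d * (p ^ 2 * q ^ 2) := by ring

theorem inv_sq_sub_inv_sq_le_of_forall_sub_le {Φ m : ℝ → ℝ} {a b : ℝ} (hab : a ≤ b)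
    (hΦ : ContinuousOn Φ (Icc a b)) (hm : ContinuousOn m (Icc a b)) (hpos : ∀ x ∈ Icc a b, 0 < Φ x)
    (hmono : MonotoneOn Φ (Icc a b))
    (hinc : ∀ x ∈ Icc a b, ∀ y ∈ Icc a b, x ≤ y → Φ y - Φ x ≤ Φ y ^ 3 * (m y - m x)) :
    (Φ a ^ 2)⁻¹ - (Φ b ^ 2)⁻¹ ≤ 2 * (m b - m a) := by
  have hκ : ∀ κ > 1, (Φ a ^ 2)⁻¹ - (Φ b ^ 2)⁻¹ ≤ 2 * κ * (m b - m a) := by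
    intro κ hκ
    suffices (Φ a ^ 2)⁻¹ + 2 * κ * m a ≤ (Φ b ^ 2)⁻¹ + 2 * κ * m b by linarith
    refine le_of_forall_eventually_nhdsGT_le (f := fun s => (Φ s ^ 2)⁻¹ + 2 * κ * m s) hab
      (((hΦ.pow 2).inv₀ fun x hx => (pow_pos (hpos x hx) 2).ne').add
        (continuousOn_const.mul hm)) fun x hx => ?_
    have hxI : x ∈ Icc a b := Ico_subset_Icc_self hx
    have hΦx : Tendsto Φ (𝓝[>] x) (𝓝 (Φ x)) := by
      rw [← nhdsWithin_Ioc_eq_nhdsGT hx.2]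
      exact (hΦ x hxI).mono (Ioc_subset_Icc_self.trans (Icc_subset_Icc_left hx.1))
    have hclose : ∀ᶠ y in 𝓝[>] x, Φ y ^ 2 < κ * Φ x ^ 2 :=
      (hΦx.pow 2).eventually_lt_const (lt_mul_left (pow_pos (hpos x hxI) 2) hκ)
    filter_upwards [hclose, Ioc_mem_nhdsGT hx.2] with y hy hyI
    have hyI' : y ∈ Icc a b := ⟨hx.1.trans hyI.1.le, hyI.2⟩
    have := inv_sq_sub_inv_sq_le (hpos x hxI) (hmono hxI hyI' hyI.1.le)
      (hinc x hxI y hyI' hyI.1.le) hy.le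
    linarith
  have hlim : Tendsto (fun κ : ℝ => 2 * κ * (m b - m a)) (𝓝[>] 1) (𝓝 (2 * 1 * (m b - m a))) :=
    (Continuous.tendsto (by fun_prop) 1).mono_left nhdsWithin_le_nhds
  simpa using ge_of_tendsto hlim (eventually_nhdsWithin_of_forall hκ)

theorem inv_sq_sub_inv_sq_add_integral_le {μ H : ℝ → ℝ} {a b H₀ : ℝ} (hab : a ≤ b)
    (hH₀ : 0 < H₀) (hμ : IntegrableOn μ (Icc a b)) (hμ0 : ∀ r ∈ Icc a b, 0 ≤ μ r)
    (hH : ContinuousOn H (Icc a b)) (hH0 : ∀ r ∈ Icc a b, 0 ≤ H r)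
    (hle : ∀ s ∈ Icc a b, H s ≤ H₀ + ∫ r in a..s, μ r * H r ^ 3) :
    (H₀ ^ 2)⁻¹ - ((H₀ + ∫ r in a..b, μ r * H r ^ 3) ^ 2)⁻¹ ≤ 2 * ∫ r in a..b, μ r := by
  set Φ : ℝ → ℝ := fun s => H₀ + ∫ r in a..s, μ r * H r ^ 3
  set m : ℝ → ℝ := fun s => ∫ r in a..s, μ r
  have ha : a ∈ Icc a b := left_mem_Icc.2 hab
  have hμH : IntegrableOn (fun r => μ r * H r ^ 3) (Icc a b) :=
    hμ.mul_continuousOn (hH.pow 3) isCompact_Icc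
  have hii {f : ℝ → ℝ} (hf : IntegrableOn f (Icc a b)) {x y : ℝ} (hx : x ∈ Icc a b)
      (hy : y ∈ Icc a b) : IntervalIntegrable f volume x y :=
    (hf.mono_set (uIcc_subset_Icc hx hy)).intervalIntegrable
  have hprim {f : ℝ → ℝ} (hf : IntegrableOn f (Icc a b)) :
      ContinuousOn (fun s => ∫ r in a..s, f r) (Icc a b) := by
    simpa only [uIcc_of_le hab] using continuousOn_primitive_interval (a := a) (b := b)
      (by rwa [uIcc_of_le hab])
  have hsub {f : ℝ → ℝ} (hf : IntegrableOn f (Icc a b)) {x y : ℝ} (hx : x ∈ Icc a b)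
      (hy : y ∈ Icc a b) : (∫ r in a..y, f r) - ∫ r in a..x, f r = ∫ r in x..y, f r :=
    integral_interval_sub_left (hii hf ha hy) (hii hf ha hx)
  have hmono : MonotoneOn Φ (Icc a b) := fun x hx y hy hxy => by
    have hIcc : Icc x y ⊆ Icc a b := Icc_subset_Icc hx.1 hy.2
    have := integral_nonneg (μ := volume) hxy fun r hr =>
      mul_nonneg (hμ0 r (hIcc hr)) (pow_nonneg (hH0 r (hIcc hr)) 3)
    linarith [hsub hμH hx hy]
  have hΦa : Φ a = H₀ := by simp only [Φ, integral_same, add_zero]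
  have hpos (x : ℝ) (hx : x ∈ Icc a b) : 0 < Φ x := hΦa ▸ hH₀ |>.trans_le (hmono ha hx hx.1)
  have hinc (x : ℝ) (hx : x ∈ Icc a b) (y : ℝ) (hy : y ∈ Icc a b) (hxy : x ≤ y) :
      Φ y - Φ x ≤ Φ y ^ 3 * (m y - m x) := by
    have hIcc : Icc x y ⊆ Icc a b := Icc_subset_Icc hx.1 hy.2
    calc Φ y - Φ x = ∫ r in x..y, μ r * H r ^ 3 := by rw [← hsub hμH hx hy]; ring
      _ ≤ ∫ r in x..y, μ r * Φ y ^ 3 :=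
        integral_mono_on hxy (hii hμH hx hy) (hii (hμ.mul_const _) hx hy) fun r hr =>
          mul_le_mul_of_nonneg_left (pow_le_pow_left₀ (hH0 r (hIcc hr))
            ((hle r (hIcc hr)).trans (hmono (hIcc hr) hy hr.2)) 3) (hμ0 r (hIcc hr))
      _ = Φ y ^ 3 * (m y - m x) := by
        rw [intervalIntegral.integral_mul_const, ← hsub hμ hx hy]; ring
  have hcmp := inv_sq_sub_inv_sq_le_of_forall_sub_le (Φ := Φ) (m := m) hab
    (continuousOn_const.add (hprim hμH)) (hprim hμ) hpos hmono hinc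
  rwa [hΦa, show m a = 0 from integral_same, sub_zero] at hcmp

theorem sq_mul_inv_sq_sub_two_integral_le_one {μ H : ℝ → ℝ} {a b H₀ : ℝ} (hab : a ≤ b)
    (hH₀ : 0 < H₀) (hμ : IntegrableOn μ (Icc a b)) (hμ0 : ∀ r ∈ Icc a b, 0 ≤ μ r)
    (hH : ContinuousOn H (Icc a b)) (hH0 : ∀ r ∈ Icc a b, 0 ≤ H r)
    (hle : ∀ s ∈ Icc a b, H s ≤ H₀ + ∫ r in a..s, μ r * H r ^ 3) :
    H b ^ 2 * ((H₀ ^ 2)⁻¹ - 2 * ∫ r in a..b, μ r) ≤ 1 := by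
  set Φb := H₀ + ∫ r in a..b, μ r * H r ^ 3
  have hb : b ∈ Icc a b := right_mem_Icc.2 hab
  have hΦb : 0 < Φb := lt_add_of_pos_of_le hH₀ <| integral_nonneg (μ := volume) hab fun r hr =>
    mul_nonneg (hμ0 r hr) (pow_nonneg (hH0 r hr) 3)
  have hcmp := inv_sq_sub_inv_sq_add_integral_le hab hH₀ hμ hμ0 hH hH0 hle
  rcases le_total ((H₀ ^ 2)⁻¹ - 2 * ∫ r in a..b, μ r) 0 with hneg | hnn
  · exact (mul_nonpos_of_nonneg_of_nonpos (sq_nonneg _) hneg).trans zero_le_one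
  · calc H b ^ 2 * ((H₀ ^ 2)⁻¹ - 2 * ∫ r in a..b, μ r) ≤ Φb ^ 2 * (Φb ^ 2)⁻¹ := by
          gcongr
          · exact hH0 b hb
          · exact hle b hb
          · linarith
      _ = 1 := mul_inv_cancel₀ (pow_pos hΦb 2).ne'

theorem setIntegral_lt_of_lintegral_ofReal_lt {α : Type*} [MeasurableSpace α] {ν : Measure α}
    {f : α → ℝ} {s t : Set α} {q : ℝ} (hst : s ⊆ t) (hs : MeasurableSet s)
    (hf : IntegrableOn f s ν) (hf0 : ∀ x ∈ s, 0 ≤ f x)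
    (hq : ∫⁻ x in t, ENNReal.ofReal (f x) ∂ν < ENNReal.ofReal q) :
    ∫ x in s, f x ∂ν < q := by
  refine (ENNReal.ofReal_lt_ofReal_iff'.1 (lt_of_le_of_lt ?_ hq)).1
  rw [ofReal_integral_eq_lintegral_ofReal hf ((ae_restrict_iff' hs).2 (ae_of_all _ hf0))]
  exact lintegral_mono_set hst

theorem stmt_13_general (T : ℝ≥0∞)
    (μ : ℝ → ℝ)
    (hμ_nonneg : ∀ t, 0 ≤ t → ENNReal.ofReal t < T → 0 ≤ μ t)
    (hμ_loc : ∀ t, 0 ≤ t → ENNReal.ofReal t < T → IntegrableOn μ (Set.Icc 0 t))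
    (H₀ : ℝ) (hH₀ : 0 < H₀)
    (H : ℝ → ℝ)
    (hH_cont : ContinuousOn H {t : ℝ | 0 ≤ t ∧ ENNReal.ofReal t < T})
    (hH_nonneg : ∀ t, 0 ≤ t → ENNReal.ofReal t < T → 0 ≤ H t)
    (hH : ∀ t, 0 ≤ t → ENNReal.ofReal t < T →
      H t ≤ H₀ + ∫ r in Set.Ioc 0 t, μ r * H r ^ 3)
    (hblow : ∀ M : ℝ, ∃ t, 0 ≤ t ∧ ENNReal.ofReal t < T ∧ M < H t) :
    ENNReal.ofReal (1 / (2 * H₀ ^ 2)) ≤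
      ∫⁻ r in {t : ℝ | 0 ≤ t ∧ ENNReal.ofReal t < T}, ENNReal.ofReal (μ r) := by
  set D := {t : ℝ | 0 ≤ t ∧ ENNReal.ofReal t < T}
  by_contra! hlt
  obtain ⟨q, -, hDq, hq⟩ := ENNReal.lt_iff_exists_real_btwn.1 hlt
  set c := (H₀ ^ 2)⁻¹ - 2 * q
  have hc : 0 < c := by
    have hq' : q < 1 / (2 * H₀ ^ 2) := (ENNReal.ofReal_lt_ofReal_iff'.1 hq).1
    have : 1 / (2 * H₀ ^ 2) = (H₀ ^ 2)⁻¹ / 2 := by ring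
    linarith
  have hIccD (t : ℝ) (ht : t ∈ D) : Icc 0 t ⊆ D := fun r hr =>
    ⟨hr.1, (ENNReal.ofReal_le_ofReal hr.2).trans_lt ht.2⟩
  have hbound (t : ℝ) (ht : t ∈ D) : H t ^ 2 * c ≤ 1 := by
    have hμt : IntegrableOn μ (Icc 0 t) := hμ_loc t ht.1 ht.2
    have hμ0 (r : ℝ) (hr : r ∈ Icc 0 t) : 0 ≤ μ r :=
      hμ_nonneg r (hIccD t ht hr).1 (hIccD t ht hr).2
    have hmq : ∫ r in 0..t, μ r ≤ q := by
      rw [integral_of_le ht.1]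
      exact (setIntegral_lt_of_lintegral_ofReal_lt (Ioc_subset_Icc_self.trans (hIccD t ht))
        measurableSet_Ioc (hμt.mono_set Ioc_subset_Icc_self)
        (fun r hr => hμ0 r (Ioc_subset_Icc_self hr)) hDq).le
    calc H t ^ 2 * c
        ≤ H t ^ 2 * ((H₀ ^ 2)⁻¹ - 2 * ∫ r in 0..t, μ r) := by gcongr; linarith
      _ ≤ 1 := sq_mul_inv_sq_sub_two_integral_le_one ht.1 hH₀ hμt hμ0
          (hH_cont.mono (hIccD t ht))
          (fun r hr => hH_nonneg r (hIccD t ht hr).1 (hIccD t ht hr).2) fun s hs => by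
            rw [integral_of_le hs.1]
            exact hH s (hIccD t ht hs).1 (hIccD t ht hs).2
  obtain ⟨t, ht0, htT, hMt⟩ := hblow (1 + c⁻¹)
  have hHt := hbound t ⟨ht0, htT⟩
  have hcc : c⁻¹ * c = 1 := inv_mul_cancel₀ hc.ne'
  nlinarith [inv_pos.2 hc]

/-- Lower bound on the blow-up time: if H satisfies the cubic integral inequality
on [0,T*) and is unbounded there, then ∫₀^{T*} μ(r) dr ≥ 1/(2·H₀²). -/
theorem stmt_13 (T : ℝ≥0∞) (hT : 0 < T)
    (μ : ℝ → ℝ)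
    (hμ_nonneg : ∀ t, 0 ≤ t → ENNReal.ofReal t < T → 0 ≤ μ t)
    (hμ_loc : ∀ t, 0 ≤ t → ENNReal.ofReal t < T → IntegrableOn μ (Set.Icc 0 t))
    (H₀ : ℝ) (hH₀ : 0 < H₀)
    (H : ℝ → ℝ)
    (hH_cont : ContinuousOn H {t : ℝ | 0 ≤ t ∧ ENNReal.ofReal t < T})
    (hH_nonneg : ∀ t, 0 ≤ t → ENNReal.ofReal t < T → 0 ≤ H t)
    (hH : ∀ t, 0 ≤ t → ENNReal.ofReal t < T →
      H t ≤ H₀ + ∫ r in Set.Ioc 0 t, μ r * H r ^ 3)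
    (hblow : ∀ M : ℝ, ∃ t, 0 ≤ t ∧ ENNReal.ofReal t < T ∧ M < H t) :
    ENNReal.ofReal (1 / (2 * H₀ ^ 2)) ≤
      ∫⁻ r in {t : ℝ | 0 ≤ t ∧ ENNReal.ofReal t < T}, ENNReal.ofReal (μ r) :=
  stmt_13_general T μ hμ_nonneg hμ_loc H₀ hH₀ H hH_cont hH_nonneg hH hblow
end

section
/- Let T* ∈ (0,∞], let μ : [0,T*) → [0,∞) be locally Lebesgue integrable, let y₀ > 0, and let y : [0,T*) → [0,∞) be continuous and satisfy y(t) ≤ y₀ + ∫₀ᵗ μ(r)·y(r)⁷ dr for all t ∈ [0,T*). If sup_{t ∈ [0,T*)} y(t) = ∞, then ∫₀^{T*} μ(r) dr ≥ 1 / (6·y₀⁶). -/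
/-!
With `Y t = y₀ + ∫₀ᵗ μ y⁷ ≥ y t`, formally `(Y⁻⁶ / 6)' = -μ y⁷ / Y⁷ ≥ -μ`, hence
`1 / (6 y₀⁶) - 1 / (6 (Y t)⁶) ≤ ∫₀ᵗ μ`, and letting `y t → ∞` gives the bound.
As `Y` is only absolutely continuous, the integrated inequality is obtained by continuous
induction instead: on a short interval `[x, z]`, the tangent-line inequality for the concave
function `v ↦ -v⁻⁶ / 6` together with `Y z - Y x ≤ (Y z)⁷ ∫ₓᶻ μ` yields the increment bound
up to a factor `K > 1` (by continuity of `Y`), and `K → 1` at the end.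
-/

open MeasureTheory Set Filter Topology
open scoped ENNReal

theorem inv_pow_sub_inv_pow_le {u v : ℝ} (hu : 0 < u) (hv : 0 < v) (n : ℕ) :
    (v ^ n)⁻¹ - (u ^ n)⁻¹ ≤ n * (u - v) / v ^ (n + 1) := by
  have bernoulli := one_add_mul_le_pow (a := v / u - 1) (by linarith [div_pos hv hu]) (n + 1)
  rw [add_sub_cancel, div_pow, le_div_iff₀ (by positivity)] at bernoulli
  have key : (n + 1) * v * u ^ n - n * u ^ (n + 1) ≤ v ^ (n + 1) := by
    refine le_of_eq_of_le ?_ bernoulli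
    rw [pow_succ]
    field_simp
    push_cast
    ring
  rw [inv_sub_inv (by positivity) (by positivity),
    div_le_div_iff₀ (by positivity) (by positivity)]
  have hvn : 0 < v ^ n := by positivity
  calc (u ^ n - v ^ n) * v ^ (n + 1) = v ^ n * (v * u ^ n - v ^ (n + 1)) := by ring
    _ ≤ v ^ n * (n * (u - v) * u ^ n) := by
        gcongr
        linear_combination key
    _ = n * (u - v) * (v ^ n * u ^ n) := by ring

section Comparison

variable {n : ℕ} {a b : ℝ} {Y G : ℝ → ℝ}

theorem inv_pow_sub_inv_pow_le_mul_of_sub_le (hY : ContinuousOn Y (Icc a b))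
    (hY_pos : ∀ s ∈ Icc a b, 0 < Y s) (hG : ContinuousOn G (Icc a b))
    (hG_mono : MonotoneOn G (Icc a b))
    (hincr : ∀ x ∈ Icc a b, ∀ z ∈ Icc a b, x ≤ z →
      Y z - Y x ≤ Y z ^ (n + 1) * (G z - G x))
    {K : ℝ} (hK : 1 < K) :
    ∀ s ∈ Icc a b, (Y a ^ n)⁻¹ - (Y s ^ n)⁻¹ ≤ K * (n * (G s - G a)) := by
  intro s hs
  refine IsClosed.Icc_subset_of_forall_mem_nhdsWithin
    (s := {r | (Y a ^ n)⁻¹ - (Y r ^ n)⁻¹ ≤ K * (n * (G r - G a))}) ?_ (by simp) ?_ hs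
  · rw [inter_comm]
    refine isClosed_Icc.isClosed_le (continuousOn_const.sub ((hY.pow n).inv₀ ?_))
      (continuousOn_const.mul (continuousOn_const.mul (hG.sub continuousOn_const)))
    exact fun s hs => (pow_pos (hY_pos s hs) n).ne'
  rintro x ⟨hxS, hxa, hxb⟩
  have hx : x ∈ Icc a b := ⟨hxa, hxb.le⟩
  have hYx := hY_pos x hx
  have hY_near : ∀ᶠ z in 𝓝[>] x, Y z ^ (n + 1) < K * Y x ^ (n + 1) := by
    have : ContinuousWithinAt (fun s => Y s ^ (n + 1)) (Ioi x) x :=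
      ((hY.pow (n + 1)) x hx).mono_of_mem_nhdsWithin
        (ordConnected_Icc.mem_nhdsGT hx ⟨hxa.trans hxb.le, le_rfl⟩ hxb)
    exact this (gt_mem_nhds (lt_mul_left (by positivity) hK))
  filter_upwards [Ioo_mem_nhdsGT hxb, hY_near] with z ⟨hxz, hzb⟩ hYz
  have hz : z ∈ Icc a b := ⟨hxa.trans hxz.le, hzb.le⟩
  have hGxz : 0 ≤ G z - G x := sub_nonneg.2 (hG_mono hx hz hxz.le)
  have step : n * (Y z - Y x) / Y x ^ (n + 1) ≤ K * (n * (G z - G x)) := by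
    rw [div_le_iff₀ (by positivity)]
    calc n * (Y z - Y x) ≤ n * (Y z ^ (n + 1) * (G z - G x)) := by
          gcongr; exact hincr x hx z hz hxz.le
      _ ≤ n * (K * Y x ^ (n + 1) * (G z - G x)) := by gcongr
      _ = K * (n * (G z - G x)) * Y x ^ (n + 1) := by ring
  calc (Y a ^ n)⁻¹ - (Y z ^ n)⁻¹
        = ((Y a ^ n)⁻¹ - (Y x ^ n)⁻¹) + ((Y x ^ n)⁻¹ - (Y z ^ n)⁻¹) := by ring
    _ ≤ K * (n * (G x - G a)) + K * (n * (G z - G x)) :=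
        add_le_add hxS ((inv_pow_sub_inv_pow_le (hY_pos z hz) hYx n).trans step)
    _ = K * (n * (G z - G a)) := by ring

theorem inv_pow_sub_inv_pow_le_of_sub_le (hab : a ≤ b) (hY : ContinuousOn Y (Icc a b))
    (hY_pos : ∀ s ∈ Icc a b, 0 < Y s) (hG : ContinuousOn G (Icc a b))
    (hG_mono : MonotoneOn G (Icc a b))
    (hincr : ∀ x ∈ Icc a b, ∀ z ∈ Icc a b, x ≤ z →
      Y z - Y x ≤ Y z ^ (n + 1) * (G z - G x)) :
    (Y a ^ n)⁻¹ - (Y b ^ n)⁻¹ ≤ n * (G b - G a) := by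
  have hb : b ∈ Icc a b := ⟨hab, le_rfl⟩
  refine ge_of_tendsto (x := 𝓝[>] (1 : ℝ)) ?_ (eventually_nhdsWithin_of_forall fun K hK =>
    inv_pow_sub_inv_pow_le_mul_of_sub_le hY hY_pos hG hG_mono hincr hK b hb)
  simpa using
    (tendsto_id.mul_const (n * (G b - G a))).mono_left (nhdsWithin_le_nhds (a := (1 : ℝ)))

end Comparison

section Primitive

variable {f : ℝ → ℝ} {a b : ℝ}

theorem MeasureTheory.IntegrableOn.intervalIntegrable_of_mem_Icc (hf : IntegrableOn f (Icc a b))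
    {x z : ℝ} (hx : x ∈ Icc a b) (hz : z ∈ Icc a b) : IntervalIntegrable f volume x z :=
  (hf.mono_set (uIcc_subset_Icc hx hz)).intervalIntegrable

theorem MeasureTheory.IntegrableOn.continuousOn_intervalIntegral (hf : IntegrableOn f (Icc a b))
    (hab : a ≤ b) :
    ContinuousOn (fun s => ∫ r in a..s, f r) (Icc a b) := by
  rw [← uIcc_of_le hab] at hf ⊢
  exact intervalIntegral.continuousOn_primitive_interval hf

theorem monotoneOn_intervalIntegral_of_nonneg (hf : IntegrableOn f (Icc a b))
    (hf_nonneg : ∀ s ∈ Icc a b, 0 ≤ f s) :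
    MonotoneOn (fun s => ∫ r in a..s, f r) (Icc a b) := by
  intro x hx z hz hxz
  have ha : a ∈ Icc a b := ⟨le_rfl, hx.1.trans hx.2⟩
  dsimp only
  rw [← sub_nonneg, intervalIntegral.integral_interval_sub_left
    (hf.intervalIntegrable_of_mem_Icc ha hz) (hf.intervalIntegrable_of_mem_Icc ha hx)]
  exact intervalIntegral.integral_nonneg hxz fun r hr =>
    hf_nonneg r ⟨hx.1.trans hr.1, hr.2.trans hz.2⟩

end Primitive

theorem inv_pow_sub_inv_pow_le_integral {n : ℕ} {a b y₀ : ℝ} {μ y : ℝ → ℝ} (hab : a ≤ b)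
    (hμ : IntegrableOn μ (Icc a b)) (hμ_nonneg : ∀ s ∈ Icc a b, 0 ≤ μ s)
    (hy : ContinuousOn y (Icc a b)) (hy_nonneg : ∀ s ∈ Icc a b, 0 ≤ y s) (hy₀ : 0 < y₀)
    (hle : ∀ s ∈ Icc a b, y s ≤ y₀ + ∫ r in a..s, μ r * y r ^ (n + 1)) (hyb : 0 < y b) :
    (y₀ ^ n)⁻¹ - (y b ^ n)⁻¹ ≤ n * ∫ r in a..b, μ r := by
  set Y := fun s => y₀ + ∫ r in a..s, μ r * y r ^ (n + 1)
  have hf : IntegrableOn (fun r => μ r * y r ^ (n + 1)) (Icc a b) :=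
    hμ.mul_continuousOn (hy.pow _) isCompact_Icc
  have hY_mono : MonotoneOn Y (Icc a b) := fun x hx z hz hxz =>
    add_le_add_right (monotoneOn_intervalIntegral_of_nonneg hf
      (fun s hs => mul_nonneg (hμ_nonneg s hs) (pow_nonneg (hy_nonneg s hs) _)) hx hz hxz) _
  have ha : a ∈ Icc a b := ⟨le_rfl, hab⟩
  have hY_pos : ∀ s ∈ Icc a b, 0 < Y s := fun s hs =>
    hy₀.trans_le (by simpa [Y] using hY_mono ha hs hs.1)
  have hincr : ∀ x ∈ Icc a b, ∀ z ∈ Icc a b, x ≤ z →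
      Y z - Y x ≤ Y z ^ (n + 1) * ((∫ r in a..z, μ r) - ∫ r in a..x, μ r) := by
    intro x hx z hz hxz
    simp only [Y, add_sub_add_left_eq_sub]
    rw [intervalIntegral.integral_interval_sub_left (hf.intervalIntegrable_of_mem_Icc ha hz)
        (hf.intervalIntegrable_of_mem_Icc ha hx),
      intervalIntegral.integral_interval_sub_left (hμ.intervalIntegrable_of_mem_Icc ha hz)
        (hμ.intervalIntegrable_of_mem_Icc ha hx), ← intervalIntegral.integral_const_mul]
    refine intervalIntegral.integral_mono_on hxz (hf.intervalIntegrable_of_mem_Icc hx hz)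
      ((hμ.intervalIntegrable_of_mem_Icc hx hz).const_mul _) fun r hr => ?_
    have hr' : r ∈ Icc a b := ⟨hx.1.trans hr.1, hr.2.trans hz.2⟩
    rw [mul_comm]
    gcongr
    · exact hμ_nonneg r hr'
    · exact hy_nonneg r hr'
    · exact (hle r hr').trans (hY_mono hr' hz hr.2)
  have hcomp : (Y a ^ n)⁻¹ - (Y b ^ n)⁻¹ ≤ n * ((∫ r in a..b, μ r) - ∫ r in a..a, μ r) :=
    inv_pow_sub_inv_pow_le_of_sub_le hab
      (continuousOn_const.add (hf.continuousOn_intervalIntegral hab)) hY_pos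
      (hμ.continuousOn_intervalIntegral hab)
      (monotoneOn_intervalIntegral_of_nonneg hμ hμ_nonneg) hincr
  rw [intervalIntegral.integral_same, sub_zero] at hcomp
  calc (y₀ ^ n)⁻¹ - (y b ^ n)⁻¹ ≤ (Y a ^ n)⁻¹ - (Y b ^ n)⁻¹ := by
        simp only [Y, intervalIntegral.integral_same, add_zero]
        gcongr
        exact hle b ⟨hab, le_rfl⟩
    _ ≤ n * ∫ r in a..b, μ r := hcomp

theorem ofReal_inv_pow_sub_inv_pow_div_le_lintegral {n : ℕ} {a b y₀ : ℝ} {μ y : ℝ → ℝ}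
    (hab : a ≤ b) (hμ : IntegrableOn μ (Icc a b)) (hμ_nonneg : ∀ s ∈ Icc a b, 0 ≤ μ s)
    (hy : ContinuousOn y (Icc a b)) (hy_nonneg : ∀ s ∈ Icc a b, 0 ≤ y s) (hy₀ : 0 < y₀)
    (hle : ∀ s ∈ Icc a b, y s ≤ y₀ + ∫ r in Ioc a s, μ r * y r ^ (n + 1))
    (hyb : 0 < y b) :
    ENNReal.ofReal (((y₀ ^ n)⁻¹ - (y b ^ n)⁻¹) / n) ≤
      ∫⁻ r in Ioc a b, ENNReal.ofReal (μ r) := by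
  have key := inv_pow_sub_inv_pow_le_integral hab hμ hμ_nonneg hy hy_nonneg hy₀
    (fun s hs => by rw [intervalIntegral.integral_of_le hs.1]; exact hle s hs) hyb
  rw [intervalIntegral.integral_of_le hab] at key
  have hμ_nonneg_ae : 0 ≤ᵐ[volume.restrict (Ioc a b)] μ :=
    (ae_restrict_iff' measurableSet_Ioc).2
      (ae_of_all _ fun r hr => hμ_nonneg r (Ioc_subset_Icc_self hr))
  rw [← ofReal_integral_eq_lintegral_ofReal (hμ.mono_set Ioc_subset_Icc_self) hμ_nonneg_ae]
  exact ENNReal.ofReal_le_ofReal (div_le_of_le_mul₀ n.cast_nonneg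
    (integral_nonneg_of_ae hμ_nonneg_ae) (key.trans_eq (mul_comm _ _)))

theorem stmt_15_general (T : ℝ≥0∞)
    (μ : ℝ → ℝ)
    (hμ_nonneg : ∀ t, 0 ≤ t → ENNReal.ofReal t < T → 0 ≤ μ t)
    (hμ_loc : ∀ t, 0 ≤ t → ENNReal.ofReal t < T → IntegrableOn μ (Set.Icc 0 t))
    (y₀ : ℝ) (hy₀ : 0 < y₀)
    (y : ℝ → ℝ)
    (hy_cont : ContinuousOn y {t : ℝ | 0 ≤ t ∧ ENNReal.ofReal t < T})
    (hy_nonneg : ∀ t, 0 ≤ t → ENNReal.ofReal t < T → 0 ≤ y t)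
    (hy : ∀ t, 0 ≤ t → ENNReal.ofReal t < T →
      y t ≤ y₀ + ∫ r in Set.Ioc 0 t, μ r * y r ^ 7)
    (hblow : ∀ M : ℝ, ∃ t, 0 ≤ t ∧ ENNReal.ofReal t < T ∧ M < y t) :
    ENNReal.ofReal (1 / (6 * y₀ ^ 6)) ≤
      ∫⁻ r in {t : ℝ | 0 ≤ t ∧ ENNReal.ofReal t < T}, ENNReal.ofReal (μ r) := by
  set S := {t : ℝ | 0 ≤ t ∧ ENNReal.ofReal t < T}
  choose t ht0 htT hyt using fun k : ℕ => hblow k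
  have hbound (k : ℕ) : ENNReal.ofReal (((y₀ ^ 6)⁻¹ - (y (t k) ^ 6)⁻¹) / 6) ≤
      ∫⁻ r in S, ENNReal.ofReal (μ r) := by
    have hIcc : Icc 0 (t k) ⊆ S := fun s hs =>
      ⟨hs.1, (ENNReal.ofReal_le_ofReal hs.2).trans_lt (htT k)⟩
    have := ofReal_inv_pow_sub_inv_pow_div_le_lintegral (n := 6) (ht0 k)
      (hμ_loc _ (ht0 k) (htT k)) (fun s hs => hμ_nonneg s (hIcc hs).1 (hIcc hs).2)
      (hy_cont.mono hIcc) (fun s hs => hy_nonneg s (hIcc hs).1 (hIcc hs).2) hy₀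
      (fun s hs => hy s (hIcc hs).1 (hIcc hs).2) ((Nat.cast_nonneg k).trans_lt (hyt k))
    exact (Nat.cast_ofNat (R := ℝ) (n := 6) ▸ this).trans
      (lintegral_mono_set (Ioc_subset_Icc_self.trans hIcc))
  have hinv : Tendsto (fun k => (y (t k) ^ 6)⁻¹) atTop (𝓝 0) :=
    tendsto_inv_atTop_zero.comp ((tendsto_pow_atTop (by norm_num)).comp
      (tendsto_atTop_mono (fun k => (hyt k).le) tendsto_natCast_atTop_atTop))
  refine le_of_tendsto' (x := atTop) ?_ hbound
  convert ENNReal.tendsto_ofReal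
    (((tendsto_const_nhds (x := (y₀ ^ 6)⁻¹)).sub hinv).div_const 6) using 3
  ring

/-- Lower bound on the blow-up time: if y satisfies the seventh-power integral
inequality on [0,T*) and is unbounded there, then ∫₀^{T*} μ(r) dr ≥ 1/(6·y₀⁶). -/
theorem stmt_15 (T : ℝ≥0∞) (hT : 0 < T)
    (μ : ℝ → ℝ)
    (hμ_nonneg : ∀ t, 0 ≤ t → ENNReal.ofReal t < T → 0 ≤ μ t)
    (hμ_loc : ∀ t, 0 ≤ t → ENNReal.ofReal t < T → IntegrableOn μ (Set.Icc 0 t))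
    (y₀ : ℝ) (hy₀ : 0 < y₀)
    (y : ℝ → ℝ)
    (hy_cont : ContinuousOn y {t : ℝ | 0 ≤ t ∧ ENNReal.ofReal t < T})
    (hy_nonneg : ∀ t, 0 ≤ t → ENNReal.ofReal t < T → 0 ≤ y t)
    (hy : ∀ t, 0 ≤ t → ENNReal.ofReal t < T →
      y t ≤ y₀ + ∫ r in Set.Ioc 0 t, μ r * y r ^ 7)
    (hblow : ∀ M : ℝ, ∃ t, 0 ≤ t ∧ ENNReal.ofReal t < T ∧ M < y t) :
    ENNReal.ofReal (1 / (6 * y₀ ^ 6)) ≤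
      ∫⁻ r in {t : ℝ | 0 ≤ t ∧ ENNReal.ofReal t < T}, ENNReal.ofReal (μ r) :=
  stmt_15_general T μ hμ_nonneg hμ_loc y₀ hy₀ y hy_cont hy_nonneg hy hblow
end

section
/- Let C > 0 and H₀ ≥ 1 be real numbers, let a, b : [0,∞) → [0,∞) be Lebesgue integrable with A = ∫₀^∞ a(τ) dτ and B = ∫₀^∞ b(τ) dτ, and set h = exp(4C³H₀²A)·(H₀ + 8C³H₀³(A + B)). Assume A + B ≤ (ln 2)/(12C³h²). Let (Hₙ)_{n≥1} be a sequence of nonnegative measurable functions on [0,∞) such that H₁(t) ≤ 2Ch for all t ≥ 0, and for every n ≥ 1 and all t ≥ 0, H_{n+1}(t) ≤ C·exp(C·∫₀ᵗ a(τ)·Hₙ(τ)² dτ)·(H₀ + ∫₀ᵗ b(τ)·Hₙ(τ)³ dτ). Then Hₙ(t) ≤ 2Ch for every n ≥ 1 and every t ≥ 0. -/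
/-!
Induction on `n`. If `0 ≤ Hₙ ≤ M := 2Ch` on `[0, ∞)`, the two integrals in the recursive bound are at
most `M²A` and `M³B`, so `Hₙ₊₁(t) ≤ C · exp(4C³h²A) · (H₀ + 8C³h³B)`. Since `H₀ ≤ h`, the smallness
condition `12C³h²(A + B) ≤ ln 2` makes the exponent at most `(ln 2)/3` and the bracket at most
`h(1 + 2 ln 2/3)`, and `2^{1/3}(1 + 2 ln 2/3) < 2` closes the induction.
-/

open MeasureTheory Real Set

lemma setIntegral_mul_le_mul_setIntegral {α : Type*} [MeasurableSpace α] {μ : Measure α}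
    {f g : α → ℝ} {s t : Set α} {M : ℝ} (ht : MeasurableSet t) (hst : s ⊆ t)
    (hf : IntegrableOn f t μ) (hf₀ : ∀ x ∈ t, 0 ≤ f x) (hM : 0 ≤ M)
    (hg₀ : ∀ x ∈ s, 0 ≤ g x) (hgM : ∀ x ∈ s, g x ≤ M) :
    ∫ x in s, f x * g x ∂μ ≤ M * ∫ x in t, f x ∂μ :=
  calc ∫ x in s, f x * g x ∂μ
      ≤ ∫ x in s, f x * M ∂μ :=
        setIntegral_mono_of_nonneg (fun x hx ↦ mul_nonneg (hf₀ x (hst hx)) (hg₀ x hx))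
          (fun x hx ↦ mul_le_mul_of_nonneg_left (hgM x hx) (hf₀ x (hst hx)))
          ((hf.mono_set hst).mul_const M)
    _ = M * ∫ x in s, f x ∂μ := by rw [integral_mul_const, mul_comm]
    _ ≤ M * ∫ x in t, f x ∂μ :=
        mul_le_mul_of_nonneg_left
          (setIntegral_mono_set hf (ae_restrict_of_forall_mem ht hf₀) hst.eventuallyLE) hM

lemma exp_log_two_div_three_mul_le_two : exp (log 2 / 3) * (1 + 2 * log 2 / 3) ≤ 2 := by
  have hcube : exp (log 2 / 3) ^ 3 = 2 := by
    rw [← exp_nat_mul, Nat.cast_ofNat, mul_div_cancel₀ _ three_ne_zero, exp_log two_pos]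
  have hroot : exp (log 2 / 3) ≤ 1.26 := by
    nlinarith [exp_pos (log 2 / 3), sq_nonneg (exp (log 2 / 3) - 1.26)]
  have hlog : log 2 < 0.6932 := log_two_lt_d9.trans (by norm_num)
  nlinarith [exp_pos (log 2 / 3), log_pos one_lt_two]

lemma exp_mul_add_le_two_mul {C H₀ h A B : ℝ} (hC : 0 < C) (hH₀ : 0 ≤ H₀) (hH₀h : H₀ ≤ h)
    (hA : 0 ≤ A) (hB : 0 ≤ B) (hsmall : 12 * C ^ 3 * h ^ 2 * (A + B) ≤ log 2) :
    exp (4 * C ^ 3 * h ^ 2 * A) * (H₀ + 8 * C ^ 3 * h ^ 3 * B) ≤ 2 * h := by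
  have hh : 0 ≤ h := hH₀.trans hH₀h
  have hexp : exp (4 * C ^ 3 * h ^ 2 * A) ≤ exp (log 2 / 3) := by
    gcongr
    nlinarith [show 0 ≤ C ^ 3 * h ^ 2 * B by positivity]
  have hbracket : H₀ + 8 * C ^ 3 * h ^ 3 * B ≤ h * (1 + 2 * log 2 / 3) := by
    nlinarith [show 0 ≤ C ^ 3 * h ^ 3 * A by positivity]
  calc exp (4 * C ^ 3 * h ^ 2 * A) * (H₀ + 8 * C ^ 3 * h ^ 3 * B)
      ≤ exp (log 2 / 3) * (h * (1 + 2 * log 2 / 3)) := by gcongr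
    _ = h * (exp (log 2 / 3) * (1 + 2 * log 2 / 3)) := by ring
    _ ≤ h * 2 := by gcongr; exact exp_log_two_div_three_mul_le_two
    _ = 2 * h := mul_comm h 2

lemma exp_integral_mul_add_integral_le {C H₀ h A B : ℝ} {a b G : ℝ → ℝ} (hC : 0 < C)
    (hH₀ : 0 ≤ H₀) (hH₀h : H₀ ≤ h)
    (ha₀ : ∀ t, 0 ≤ t → 0 ≤ a t) (hb₀ : ∀ t, 0 ≤ t → 0 ≤ b t)
    (ha : IntegrableOn a (Ici 0)) (hb : IntegrableOn b (Ici 0))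
    (hA : A = ∫ τ in Ici 0, a τ) (hB : B = ∫ τ in Ici 0, b τ)
    (hsmall : 12 * C ^ 3 * h ^ 2 * (A + B) ≤ log 2)
    (hG₀ : ∀ t, 0 ≤ t → 0 ≤ G t) (hG : ∀ t, 0 ≤ t → G t ≤ 2 * C * h) {t : ℝ} :
    C * exp (C * ∫ τ in Ioc 0 t, a τ * G τ ^ 2) * (H₀ + ∫ τ in Ioc 0 t, b τ * G τ ^ 3)
      ≤ 2 * C * h := by
  have hh : 0 ≤ h := hH₀.trans hH₀h
  have hsub : Ioc 0 t ⊆ Ici 0 := Ioc_subset_Ioi_self.trans Ioi_subset_Ici_self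
  have hG₀' (τ) (hτ : τ ∈ Ioc 0 t) : 0 ≤ G τ := hG₀ τ hτ.1.le
  have hIa : ∫ τ in Ioc 0 t, a τ * G τ ^ 2 ≤ (2 * C * h) ^ 2 * A := hA ▸
    setIntegral_mul_le_mul_setIntegral measurableSet_Ici hsub ha ha₀ (by positivity)
      (fun τ hτ ↦ pow_nonneg (hG₀' τ hτ) 2)
      (fun τ hτ ↦ pow_le_pow_left₀ (hG₀' τ hτ) (hG τ hτ.1.le) 2)
  have hIb : ∫ τ in Ioc 0 t, b τ * G τ ^ 3 ≤ (2 * C * h) ^ 3 * B := hB ▸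
    setIntegral_mul_le_mul_setIntegral measurableSet_Ici hsub hb hb₀ (by positivity)
      (fun τ hτ ↦ pow_nonneg (hG₀' τ hτ) 3)
      (fun τ hτ ↦ pow_le_pow_left₀ (hG₀' τ hτ) (hG τ hτ.1.le) 3)
  have hIb₀ : 0 ≤ ∫ τ in Ioc 0 t, b τ * G τ ^ 3 :=
    setIntegral_nonneg measurableSet_Ioc fun τ hτ ↦
      mul_nonneg (hb₀ τ hτ.1.le) (pow_nonneg (hG₀' τ hτ) 3)
  calc C * exp (C * ∫ τ in Ioc 0 t, a τ * G τ ^ 2) * (H₀ + ∫ τ in Ioc 0 t, b τ * G τ ^ 3)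
      ≤ C * exp (C * ((2 * C * h) ^ 2 * A)) * (H₀ + (2 * C * h) ^ 3 * B) := by
        gcongr
    _ = C * (exp (4 * C ^ 3 * h ^ 2 * A) * (H₀ + 8 * C ^ 3 * h ^ 3 * B)) := by ring_nf
    _ ≤ C * (2 * h) := mul_le_mul_of_nonneg_left
        (exp_mul_add_le_two_mul hC hH₀ hH₀h (hA ▸ setIntegral_nonneg measurableSet_Ici ha₀)
          (hB ▸ setIntegral_nonneg measurableSet_Ici hb₀) hsmall) hC.le
    _ = 2 * C * h := by ring

theorem stmt_17_general (C H₀ : ℝ) (hC : 0 < C) (hH₀ : 1 ≤ H₀)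
    (a b : ℝ → ℝ)
    (ha_nonneg : ∀ t, 0 ≤ t → 0 ≤ a t) (hb_nonneg : ∀ t, 0 ≤ t → 0 ≤ b t)
    (ha_int : IntegrableOn a (Set.Ici 0)) (hb_int : IntegrableOn b (Set.Ici 0))
    (A B : ℝ) (hA : A = ∫ τ in Set.Ici (0:ℝ), a τ) (hB : B = ∫ τ in Set.Ici (0:ℝ), b τ)
    (h : ℝ) (hh : h = Real.exp (4 * C ^ 3 * H₀ ^ 2 * A) * (H₀ + 8 * C ^ 3 * H₀ ^ 3 * (A + B)))
    (hsmall : A + B ≤ Real.log 2 / (12 * C ^ 3 * h ^ 2))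
    (H : ℕ → ℝ → ℝ)
    (hH_nonneg : ∀ n, 1 ≤ n → ∀ t, 0 ≤ t → 0 ≤ H n t)
    (hH1 : ∀ t, 0 ≤ t → H 1 t ≤ 2 * C * h)
    (hrec : ∀ n, 1 ≤ n → ∀ t, 0 ≤ t →
      H (n + 1) t ≤ C * Real.exp (C * ∫ τ in Set.Ioc 0 t, a τ * H n τ ^ 2) *
        (H₀ + ∫ τ in Set.Ioc 0 t, b τ * H n τ ^ 3)) :
    ∀ n, 1 ≤ n → ∀ t, 0 ≤ t → H n t ≤ 2 * C * h := by
  have hA₀ : 0 ≤ A := hA ▸ setIntegral_nonneg measurableSet_Ici ha_nonneg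
  have hB₀ : 0 ≤ B := hB ▸ setIntegral_nonneg measurableSet_Ici hb_nonneg
  have hH₀h : H₀ ≤ h := by
    rw [hh]
    nlinarith [one_le_exp (show 0 ≤ 4 * C ^ 3 * H₀ ^ 2 * A by positivity),
      show 0 ≤ 8 * C ^ 3 * H₀ ^ 3 * (A + B) by positivity]
  have hsmall' : 12 * C ^ 3 * h ^ 2 * (A + B) ≤ log 2 := by
    have : 0 < h := by linarith
    rwa [le_div_iff₀ (by positivity), mul_comm] at hsmall
  intro n hn
  induction n, hn using Nat.le_induction with
  | base => exact hH1
  | succ n hn ih =>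
    exact fun t ht ↦ (hrec n hn t ht).trans <|
      exp_integral_mul_add_integral_le hC (by linarith) hH₀h ha_nonneg hb_nonneg ha_int hb_int
        hA hB hsmall' (hH_nonneg n hn) ih

/-- Inductive uniform bound for the Friedrichs approximations (Section 2.2):
under the smallness condition A + B ≤ ln 2/(12C³h²), every Hₙ is bounded by 2Ch. -/
theorem stmt_17 (C H₀ : ℝ) (hC : 0 < C) (hH₀ : 1 ≤ H₀)
    (a b : ℝ → ℝ)
    (ha_nonneg : ∀ t, 0 ≤ t → 0 ≤ a t) (hb_nonneg : ∀ t, 0 ≤ t → 0 ≤ b t)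
    (ha_int : IntegrableOn a (Set.Ici 0)) (hb_int : IntegrableOn b (Set.Ici 0))
    (A B : ℝ) (hA : A = ∫ τ in Set.Ici (0:ℝ), a τ) (hB : B = ∫ τ in Set.Ici (0:ℝ), b τ)
    (h : ℝ) (hh : h = Real.exp (4 * C ^ 3 * H₀ ^ 2 * A) * (H₀ + 8 * C ^ 3 * H₀ ^ 3 * (A + B)))
    (hsmall : A + B ≤ Real.log 2 / (12 * C ^ 3 * h ^ 2))
    (H : ℕ → ℝ → ℝ)
    (hH_meas : ∀ n, 1 ≤ n → Measurable (H n))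
    (hH_nonneg : ∀ n, 1 ≤ n → ∀ t, 0 ≤ t → 0 ≤ H n t)
    (hH1 : ∀ t, 0 ≤ t → H 1 t ≤ 2 * C * h)
    (hrec : ∀ n, 1 ≤ n → ∀ t, 0 ≤ t →
      H (n + 1) t ≤ C * Real.exp (C * ∫ τ in Set.Ioc 0 t, a τ * H n τ ^ 2) *
        (H₀ + ∫ τ in Set.Ioc 0 t, b τ * H n τ ^ 3)) :
    ∀ n, 1 ≤ n → ∀ t, 0 ≤ t → H n t ≤ 2 * C * h :=
  stmt_17_general C H₀ hC hH₀ a b ha_nonneg hb_nonneg ha_int hb_int A B hA hB h hh hsmall H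
    hH_nonneg hH1 hrec
end
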